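/- arXiv:2605.21670 — 5 statements merged into one kernel-verified Lean document; each statement's English description precedes it below -/
import Mathlib

section
/- Let $1 \le q, p \le \infty$ and $r > 0$. There exists a constant $C > 0$ (depending only on $d$, $q$, $p$) such that for every measurable function $f : \mathbb{R}^d \to \mathbb{C}$ one has $C^{-1}\, r^{d/p}\, {}_{r}\widetilde{\|f\|}_{q,p} \le {}_{r}\|f\|_{q,p} \le C\, r^{d/p}\, {}_{r}\widetilde{\|f\|}_{q,p}$. -/
open MeasureTheory ENNReal Set Metric Filter

noncomputable section

/-- Shorthand for the Euclidean space `ℝ^d`. -/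
abbrev Rd (d : ℕ) := EuclideanSpace ℝ (Fin d)

/-- The `L^p` "norm" (with values in `ℝ≥0∞`) of an `ℝ≥0∞`-valued function. -/
def eLpNormE {α : Type*} [MeasurableSpace α] (g : α → ℝ≥0∞) (p : ℝ≥0∞) (μ : Measure α) :
    ℝ≥0∞ :=
  if p = ∞ then essSup g μ else (∫⁻ x, g x ^ p.toReal ∂μ) ^ (1 / p.toReal)

/-- The discrete `ℓ^p` norm of an `ℝ≥0∞`-valued family. -/
def lpNormE {ι : Type*} (a : ι → ℝ≥0∞) (p : ℝ≥0∞) : ℝ≥0∞ :=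
  if p = ∞ then ⨆ k, a k else (∑' k, a k ^ p.toReal) ^ (1 / p.toReal)

/-- The continuous amalgam norm `‖f‖_{q,p,r}` of `f : ℝ^d → E`:
the `L^p` norm (in `y`) of `y ↦ ‖f · χ_{B(y,r)}‖_{L^q}`. -/
def contAmalgam (d : ℕ) {E : Type*} [NormedAddCommGroup E] (f : Rd d → E)
    (q p : ℝ≥0∞) (r : ℝ) : ℝ≥0∞ :=
  eLpNormE (fun y => eLpNorm ((Metric.ball y r).indicator f) q volume) p volume

/-- The continuous amalgam norm of an `ℝ≥0∞`-valued function. -/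
def contAmalgamE (d : ℕ) (g : Rd d → ℝ≥0∞) (q p : ℝ≥0∞) (r : ℝ) : ℝ≥0∞ :=
  eLpNormE (fun y => eLpNormE ((Metric.ball y r).indicator g) q volume) p volume

/-- The half-open cube `Q_k^r = ∏_i [r kᵢ, r (kᵢ + 1))` indexed by `k ∈ ℤ^d`. -/
def unitCube (d : ℕ) (r : ℝ) (k : Fin d → ℤ) : Set (Rd d) :=
  {x | ∀ i, r * k i ≤ x i ∧ x i < r * (k i + 1)}

/-- The discrete amalgam norm: the `ℓ^p` norm over `k ∈ ℤ^d` of `‖f χ_{Q_k^r}‖_{L^q}`. -/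
def discAmalgam (d : ℕ) {E : Type*} [NormedAddCommGroup E] (f : Rd d → E)
    (q p : ℝ≥0∞) (r : ℝ) : ℝ≥0∞ :=
  lpNormE (fun k : Fin d → ℤ => eLpNorm ((unitCube d r k).indicator f) q volume) p

/-- The class `𝒢_{q,p}` of weight functions: `φ` is positive and measurable on `(0,∞)`,
`t ↦ t^{d/p} φ(t)` is almost decreasing and `t ↦ t^{d/q} φ(t)` is almost increasing
(with the convention `1/∞ = 0`). -/
structure IsGqp (d : ℕ) (q p : ℝ≥0∞) (φ : ℝ → ℝ) : Prop where
  measurable : Measurable φ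
  pos : ∀ t : ℝ, 0 < t → 0 < φ t
  almost_decreasing : ∃ C : ℝ, 0 < C ∧ ∀ r s : ℝ, 0 < r → r ≤ s →
    s ^ ((d : ℝ) * (1 / p).toReal) * φ s ≤ C * (r ^ ((d : ℝ) * (1 / p).toReal) * φ r)
  almost_increasing : ∃ C : ℝ, 0 < C ∧ ∀ r s : ℝ, 0 < r → r ≤ s →
    r ^ ((d : ℝ) * (1 / q).toReal) * φ r ≤ C * (s ^ ((d : ℝ) * (1 / q).toReal) * φ s)

/-- The generalized Fofana norm
`‖f‖_{(L^q,L^p)^φ} = sup_{r>0} φ(r)⁻¹ r^{d(-1/q - 1/p)} ‖f‖_{q,p,r}`. -/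
def fofanaNorm (d : ℕ) {E : Type*} [NormedAddCommGroup E] (f : Rd d → E)
    (q p : ℝ≥0∞) (φ : ℝ → ℝ) : ℝ≥0∞ :=
  ⨆ r : {r : ℝ // 0 < r},
    ENNReal.ofReal ((φ r)⁻¹ * (r : ℝ) ^ ((d : ℝ) * (-(1 / q).toReal - (1 / p).toReal))) *
      contAmalgam d f q p r

/-- The generalized Fofana norm of an `ℝ≥0∞`-valued function. -/
def fofanaNormE (d : ℕ) (g : Rd d → ℝ≥0∞) (q p : ℝ≥0∞) (φ : ℝ → ℝ) : ℝ≥0∞ :=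
  ⨆ r : {r : ℝ // 0 < r},
    ENNReal.ofReal ((φ r)⁻¹ * (r : ℝ) ^ ((d : ℝ) * (-(1 / q).toReal - (1 / p).toReal))) *
      contAmalgamE d g q p r

/-- The discrete variant of the generalized Fofana norm,
`sup_{r>0} φ(r)⁻¹ r^{-d/q} ‖f‖~_{q,p,r}`. -/
def fofanaNormDisc (d : ℕ) {E : Type*} [NormedAddCommGroup E] (f : Rd d → E)
    (q p : ℝ≥0∞) (φ : ℝ → ℝ) : ℝ≥0∞ :=
  ⨆ r : {r : ℝ // 0 < r},
    ENNReal.ofReal ((φ r)⁻¹ * (r : ℝ) ^ (-(d : ℝ) * (1 / q).toReal)) *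
      discAmalgam d f q p r

/-- The Hardy–Littlewood maximal function (with values in `ℝ≥0∞`). -/
def hlMax (d : ℕ) {E : Type*} [NormedAddCommGroup E] (f : Rd d → E) (x : Rd d) : ℝ≥0∞ :=
  ⨆ r : {r : ℝ // 0 < r},
    (volume (Metric.ball x (r : ℝ)))⁻¹ * ∫⁻ y in Metric.ball x (r : ℝ), (‖f y‖₊ : ℝ≥0∞)

/-!
A ball of radius `r` is covered by the `3^d` cubes `Q_k^r` whose index differs from that of the
cube containing its centre by at most one in each coordinate. Conversely, for `m > √d` the cube
of side `r / m` containing `y` lies in `B(y, r)`, and each `Q_k^r` is the union of `m^d` cubes of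
side `r / m`. Bounding pointwise and using the triangle inequality in `L^q` and `ℓ^p` reduces both
inequalities to functions constant on the cubes of a grid, whose `L^p` norm is `r^{d/p}` times the
`ℓ^p` norm of their values, because the image of Lebesgue measure under the cube index is
`r^d` times counting measure.
-/

section LpNorms

variable {p : ℝ≥0∞}

lemma eLpNormE_eq_eLpNorm {α : Type*} [MeasurableSpace α] {μ : Measure α} (hp : p ≠ 0)
    (g : α → ℝ≥0∞) : eLpNormE g p μ = eLpNorm g p μ := by
  rcases eq_or_ne p ∞ with rfl | hp'
  · simp [eLpNormE, eLpNormEssSup]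
  · simp [eLpNormE, eLpNorm_eq_eLpNorm' hp hp', eLpNorm', hp']

lemma lpNormE_eq_eLpNorm_count {ι : Type*} [MeasurableSpace ι] [MeasurableSingletonClass ι]
    (hp : p ≠ 0) (a : ι → ℝ≥0∞) : lpNormE a p = eLpNorm a p Measure.count := by
  rcases eq_or_ne p ∞ with rfl | hp'
  · simp [lpNormE]
  · simp [lpNormE, eLpNorm_eq_eLpNorm' hp hp', eLpNorm', lintegral_count, hp']

lemma lpNormE_mono {ι : Type*} {a b : ι → ℝ≥0∞} (h : ∀ k, a k ≤ b k) :
    lpNormE a p ≤ lpNormE b p := by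
  unfold lpNormE
  split_ifs
  · exact iSup_mono h
  · gcongr
    exact h _

lemma lpNormE_comp_le {ι κ : Type*} (b : κ → ℝ≥0∞) {σ : ι → κ} (hσ : Function.Injective σ) :
    lpNormE (b ∘ σ) p ≤ lpNormE b p := by
  unfold lpNormE
  split_ifs
  · exact iSup_le fun k => le_iSup b (σ k)
  · gcongr
    exact ENNReal.tsum_comp_le_tsum_of_injective hσ fun j => b j ^ p.toReal

lemma lpNormE_sum_le {ι κ : Type*} (hp : 1 ≤ p) (t : Finset ι) (F : ι → κ → ℝ≥0∞) :
    lpNormE (fun k => ∑ i ∈ t, F i k) p ≤ ∑ i ∈ t, lpNormE (F i) p := by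
  let _ : MeasurableSpace κ := ⊤
  have hp0 : p ≠ 0 := (zero_lt_one.trans_le hp).ne'
  simp only [lpNormE_eq_eLpNorm_count hp0, ← Finset.sum_fn]
  exact eLpNorm_sum_le (fun i _ => (measurable_from_top : Measurable (F i)).aestronglyMeasurable) hp

end LpNorms

section Cubes

variable {d : ℕ} {r : ℝ}

def cubeIndex (d : ℕ) (r : ℝ) (x : Rd d) : Fin d → ℤ := fun i => ⌊x i / r⌋

lemma mem_unitCube_iff_cubeIndex_eq (hr : 0 < r) {x : Rd d} {k : Fin d → ℤ} :
    x ∈ unitCube d r k ↔ cubeIndex d r x = k := by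
  simp only [unitCube, Set.mem_ofPred_eq, funext_iff, cubeIndex, Int.floor_eq_iff,
    le_div_iff₀ hr, div_lt_iff₀ hr, mul_comm r]

lemma mem_unitCube_cubeIndex (hr : 0 < r) (x : Rd d) : x ∈ unitCube d r (cubeIndex d r x) :=
  (mem_unitCube_iff_cubeIndex_eq hr).2 rfl

lemma measurable_cubeIndex : Measurable (cubeIndex d r) :=
  measurable_pi_lambda _ fun i =>
    ((PiLp.continuous_apply 2 (fun _ : Fin d => ℝ) i).measurable.div_const r).floor

lemma measurableSet_unitCube (hr : 0 < r) (k : Fin d → ℤ) : MeasurableSet (unitCube d r k) := by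
  have : unitCube d r k = cubeIndex d r ⁻¹' {k} := by
    ext x; exact mem_unitCube_iff_cubeIndex_eq hr
  exact this ▸ measurable_cubeIndex (measurableSet_singleton k)

lemma volume_unitCube (k : Fin d → ℤ) :
    volume (unitCube d r k) = ENNReal.ofReal r ^ d := by
  have : unitCube d r k = (MeasurableEquiv.toLp 2 (Fin d → ℝ)).symm ⁻¹'
      Set.univ.pi fun i => Set.Ico (r * k i) (r * (k i + 1)) := by
    ext x; simp [unitCube, Set.mem_pi]
  rw [this, (EuclideanSpace.volume_preserving_symm_measurableEquiv_toLp (Fin d)).measure_preimage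
      (MeasurableSet.univ_pi fun i => measurableSet_Ico).nullMeasurableSet, volume_pi_pi]
  simp [Real.volume_Ico, mul_add]

lemma map_cubeIndex_volume (hr : 0 < r) :
    (volume : Measure (Rd d)).map (cubeIndex d r) = ENNReal.ofReal r ^ d • Measure.count := by
  refine Measure.ext_of_singleton fun k => ?_
  rw [Measure.map_apply measurable_cubeIndex (measurableSet_singleton k)]
  have : cubeIndex d r ⁻¹' {k} = unitCube d r k := by
    ext x; exact (mem_unitCube_iff_cubeIndex_eq hr).symm
  simp [this, volume_unitCube]

lemma eLpNorm_comp_cubeIndex (hr : 0 < r) {p : ℝ≥0∞} (hp : p ≠ 0) (c : (Fin d → ℤ) → ℝ≥0∞) :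
    eLpNorm (c ∘ cubeIndex d r) p volume
      = ENNReal.ofReal (r ^ ((d : ℝ) * (1 / p).toReal)) * lpNormE c p := by
  rw [← eLpNorm_map_measure (measurable_of_countable c).aestronglyMeasurable
      measurable_cubeIndex.aemeasurable, map_cubeIndex_volume hr,
    eLpNorm_smul_measure_of_ne_zero (pow_ne_zero _ (ENNReal.ofReal_pos.2 hr).ne'),
    lpNormE_eq_eLpNorm_count hp, smul_eq_mul, ← ENNReal.ofReal_pow hr.le,
    ENNReal.ofReal_rpow_of_pos (pow_pos hr d), ← Real.rpow_natCast, ← Real.rpow_mul hr.le]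

end Cubes

section Covering

variable {d : ℕ}

lemma eLpNorm_indicator_le_sum_of_subset_biUnion {α E ι : Type*} [MeasurableSpace α]
    [NormedAddCommGroup E] {μ : Measure α} {q : ℝ≥0∞} (hq : 1 ≤ q) {f : α → E}
    (hf : AEStronglyMeasurable f μ) {t : Finset ι} {T : ι → Set α}
    (hT : ∀ i, MeasurableSet (T i)) {S : Set α} (hS : S ⊆ ⋃ i ∈ t, T i) :
    eLpNorm (S.indicator f) q μ ≤ ∑ i ∈ t, eLpNorm ((T i).indicator f) q μ := by
  have hpt : ∀ x, ‖S.indicator f x‖ₑ ≤ ∑ i ∈ t, ‖(T i).indicator f x‖ₑ := by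
    intro x
    by_cases hx : x ∈ S
    · obtain ⟨i, hi, hxi⟩ : ∃ i ∈ t, x ∈ T i := by simpa using hS hx
      calc ‖S.indicator f x‖ₑ = ‖(T i).indicator f x‖ₑ := by
            rw [Set.indicator_of_mem hx, Set.indicator_of_mem hxi]
        _ ≤ ∑ i ∈ t, ‖(T i).indicator f x‖ₑ :=
          Finset.single_le_sum (f := fun j => ‖(T j).indicator f x‖ₑ) (fun _ _ => zero_le) hi
    · simp [Set.indicator_of_notMem hx]
  calc eLpNorm (S.indicator f) q μ
      ≤ eLpNorm (∑ i ∈ t, fun x => ‖(T i).indicator f x‖ₑ) q μ :=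
        eLpNorm_mono_enorm fun x => by simpa [Finset.sum_apply] using hpt x
    _ ≤ ∑ i ∈ t, eLpNorm (fun x => ‖(T i).indicator f x‖ₑ) q μ :=
        eLpNorm_sum_le (fun i _ => (hf.indicator (hT i)).enorm.aestronglyMeasurable) hq
    _ = ∑ i ∈ t, eLpNorm ((T i).indicator f) q μ := by simp only [eLpNorm_enorm]

lemma ball_subset_biUnion_unitCube {r : ℝ} (hr : 0 < r) (y : Rd d) :
    Metric.ball y r ⊆ ⋃ ε ∈ Fintype.piFinset fun _ : Fin d => ({-1, 0, 1} : Finset ℤ),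
      unitCube d r (cubeIndex d r y + ε) := by
  intro x hx
  refine Set.mem_iUnion₂.2 ⟨cubeIndex d r x - cubeIndex d r y, ?_, by
    simpa using mem_unitCube_cubeIndex hr x⟩
  rw [Fintype.mem_piFinset]
  intro i
  have hxy : |x i / r - y i / r| < 1 := by
    rw [← sub_div, abs_div, abs_of_pos hr, div_lt_one hr, ← Real.dist_eq]
    exact (PiLp.dist_apply_le x y i).trans_lt (Metric.mem_ball.1 hx)
  rw [abs_lt] at hxy
  have h₁ : ⌊x i / r⌋ ≤ ⌊y i / r⌋ + 1 :=
    Int.floor_le_iff.2 (by push_cast; linarith [Int.lt_floor_add_one (y i / r)])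
  have h₂ : ⌊y i / r⌋ ≤ ⌊x i / r⌋ + 1 :=
    Int.floor_le_iff.2 (by push_cast; linarith [Int.lt_floor_add_one (x i / r)])
  simp only [Pi.sub_apply, cubeIndex, Finset.mem_insert, Finset.mem_singleton]
  omega

lemma unitCube_subset_ball {s r : ℝ} (hsr : (d : ℝ) * s ^ 2 < r ^ 2) (hr : 0 < r)
    {k : Fin d → ℤ} {y : Rd d} (hy : y ∈ unitCube d s k) : unitCube d s k ⊆ Metric.ball y r := by
  intro x hx
  have hcoord : ∀ i, dist (x i) (y i) ^ 2 ≤ s ^ 2 := by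
    intro i
    have h₁ := hx i
    have h₂ := hy i
    rw [Real.dist_eq, sq_abs]
    nlinarith
  have hsum : ∑ i, dist (x i) (y i) ^ 2 ≤ (d : ℝ) * s ^ 2 := by
    simpa using Finset.sum_le_sum fun i (_ : i ∈ Finset.univ) => hcoord i
  rw [Metric.mem_ball, EuclideanSpace.dist_eq, ← Real.sqrt_sq hr.le]
  exact Real.sqrt_lt_sqrt (by positivity) (hsum.trans_lt hsr)

lemma unitCube_mul_subset_biUnion {s : ℝ} (hs : 0 < s) (m : ℕ) (k : Fin d → ℤ) :
    unitCube d (m * s) k ⊆ ⋃ t ∈ Fintype.piFinset fun _ : Fin d => Finset.Ico (0 : ℤ) m,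
      unitCube d s (fun i => m * k i + t i) := by
  intro x hx
  refine Set.mem_iUnion₂.2 ⟨fun i => cubeIndex d s x i - m * k i, ?_, by
    simpa using mem_unitCube_cubeIndex hs x⟩
  rw [Fintype.mem_piFinset]
  intro i
  have hxi := hx i
  have hji := mem_unitCube_cubeIndex hs x i
  have h₁ : (m * k i : ℝ) < cubeIndex d s x i + 1 := by
    refine (mul_lt_mul_iff_right₀ hs).1 ?_
    nlinarith
  have h₂ : (cubeIndex d s x i : ℝ) < m * k i + m := by
    refine (mul_lt_mul_iff_right₀ hs).1 ?_
    nlinarith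
  rw [Finset.mem_Ico]
  constructor
  · have : (m : ℤ) * k i < cubeIndex d s x i + 1 := by exact_mod_cast h₁
    omega
  · have : cubeIndex d s x i < (m : ℤ) * k i + m := by exact_mod_cast h₂
    omega

end Covering

section Amalgam

variable {d : ℕ} {E : Type*} [NormedAddCommGroup E] {f : Rd d → E} {q p : ℝ≥0∞}

lemma contAmalgam_le_discAmalgam (hq : 1 ≤ q) (hp : 1 ≤ p) (hf : AEStronglyMeasurable f)
    {r : ℝ} (hr : 0 < r) :
    contAmalgam d f q p r ≤
      3 ^ d * (ENNReal.ofReal (r ^ ((d : ℝ) * (1 / p).toReal)) * discAmalgam d f q p r) := by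
  set a : (Fin d → ℤ) → ℝ≥0∞ := fun k => eLpNorm ((unitCube d r k).indicator f) q volume
  set N := Fintype.piFinset fun _ : Fin d => ({-1, 0, 1} : Finset ℤ)
  have hp0 : p ≠ 0 := (zero_lt_one.trans_le hp).ne'
  have hball : ∀ y, eLpNorm ((Metric.ball y r).indicator f) q volume ≤
      ∑ ε ∈ N, a (cubeIndex d r y + ε) := fun y =>
    eLpNorm_indicator_le_sum_of_subset_biUnion hq hf (fun _ => measurableSet_unitCube hr _)
      (ball_subset_biUnion_unitCube hr y)
  calc contAmalgam d f q p r
      ≤ eLpNorm (∑ ε ∈ N, (fun k => a (k + ε)) ∘ cubeIndex d r) p volume := by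
        rw [contAmalgam, eLpNormE_eq_eLpNorm hp0]
        exact eLpNorm_mono_enorm fun y => by simpa [Finset.sum_apply] using hball y
    _ ≤ ∑ ε ∈ N, eLpNorm ((fun k => a (k + ε)) ∘ cubeIndex d r) p volume :=
        eLpNorm_sum_le (fun _ _ => ((measurable_of_countable _).comp
          measurable_cubeIndex).aestronglyMeasurable) hp
    _ = ∑ ε ∈ N, ENNReal.ofReal (r ^ ((d : ℝ) * (1 / p).toReal)) *
          lpNormE (a ∘ fun k => k + ε) p := by
        simp only [eLpNorm_comp_cubeIndex hr hp0]; rfl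
    _ ≤ ∑ _ε ∈ N, ENNReal.ofReal (r ^ ((d : ℝ) * (1 / p).toReal)) * discAmalgam d f q p r := by
        gcongr with ε
        exact lpNormE_comp_le a (add_left_injective ε)
    _ = 3 ^ d * (ENNReal.ofReal (r ^ ((d : ℝ) * (1 / p).toReal)) * discAmalgam d f q p r) := by
        simp [N]

lemma rpow_mul_discAmalgam_le_contAmalgam (hp : 1 ≤ p) {s r : ℝ} (hs : 0 < s) (hr : 0 < r)
    (hsr : (d : ℝ) * s ^ 2 < r ^ 2) :
    ENNReal.ofReal (s ^ ((d : ℝ) * (1 / p).toReal)) * discAmalgam d f q p s ≤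
      contAmalgam d f q p r := by
  have hp0 : p ≠ 0 := (zero_lt_one.trans_le hp).ne'
  rw [discAmalgam, ← eLpNorm_comp_cubeIndex hs hp0, contAmalgam, eLpNormE_eq_eLpNorm hp0]
  refine eLpNorm_mono_enorm fun y => eLpNorm_mono_enorm fun x => ?_
  exact enorm_indicator_le_of_subset
    (unitCube_subset_ball hsr hr (mem_unitCube_cubeIndex hs y)) f x

lemma discAmalgam_mul_le (hq : 1 ≤ q) (hp : 1 ≤ p) (hf : AEStronglyMeasurable f) {s : ℝ}
    (hs : 0 < s) {m : ℕ} (hm : 0 < m) :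
    discAmalgam d f q p (m * s) ≤ m ^ d * discAmalgam d f q p s := by
  set b : (Fin d → ℤ) → ℝ≥0∞ := fun k => eLpNorm ((unitCube d s k).indicator f) q volume
  set T := Fintype.piFinset fun _ : Fin d => Finset.Ico (0 : ℤ) m
  have hinj : ∀ t ∈ T, Function.Injective fun k : Fin d → ℤ => fun i => m * k i + t i :=
    fun t _ k k' h => funext fun i =>
      mul_left_cancel₀ (Int.natCast_ne_zero.2 hm.ne') (add_right_cancel (congrFun h i))
  calc discAmalgam d f q p (m * s)
      ≤ lpNormE (fun k : Fin d → ℤ => ∑ t ∈ T, b fun i => m * k i + t i) p :=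
        lpNormE_mono fun k => eLpNorm_indicator_le_sum_of_subset_biUnion hq hf
          (fun _ => measurableSet_unitCube hs _)
          (by exact_mod_cast unitCube_mul_subset_biUnion hs m k)
    _ ≤ ∑ t ∈ T, lpNormE (fun k : Fin d → ℤ => b fun i => m * k i + t i) p :=
        lpNormE_sum_le hp T _
    _ ≤ ∑ _t ∈ T, discAmalgam d f q p s :=
        Finset.sum_le_sum fun t ht => lpNormE_comp_le b (hinj t ht)
    _ = m ^ d * discAmalgam d f q p s := by simp [T]

lemma rpow_mul_discAmalgam_le_contAmalgam_of_lt_sq (hq : 1 ≤ q) (hp : 1 ≤ p)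
    (hf : AEStronglyMeasurable f) {r : ℝ} (hr : 0 < r) {m : ℕ} (hm : (d : ℝ) < m ^ 2) :
    ENNReal.ofReal (r ^ ((d : ℝ) * (1 / p).toReal)) * discAmalgam d f q p r ≤
      m ^ (2 * d) * contAmalgam d f q p r := by
  set α := (d : ℝ) * (1 / p).toReal
  have hm0 : 0 < m := Nat.pos_of_ne_zero (by rintro rfl; exact absurd hm (by simp))
  have hα : α ≤ d := by
    have : (1 / p).toReal ≤ 1 :=
      ENNReal.toReal_le_of_le_ofReal zero_le_one (by simpa using ENNReal.inv_le_one.2 hp)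
    exact mul_le_of_le_one_right d.cast_nonneg this
  set s := r / m
  have hs : 0 < s := by positivity
  have hms : (m : ℝ) * s = r := mul_div_cancel₀ r (by positivity)
  have hsr : (d : ℝ) * s ^ 2 < r ^ 2 := by
    rw [← hms, mul_pow]
    exact mul_lt_mul_of_pos_right hm (by positivity)
  have hmα : ENNReal.ofReal ((m : ℝ) ^ α) ≤ (m : ℝ≥0∞) ^ d := by
    rw [← ENNReal.ofReal_natCast, ← ENNReal.ofReal_pow m.cast_nonneg, ← Real.rpow_natCast]
    exact ENNReal.ofReal_le_ofReal
      (Real.rpow_le_rpow_of_exponent_le (by exact_mod_cast hm0) hα)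
  calc ENNReal.ofReal (r ^ α) * discAmalgam d f q p r
      = ENNReal.ofReal ((m : ℝ) ^ α) *
          (ENNReal.ofReal (s ^ α) * discAmalgam d f q p (m * s)) := by
        rw [hms, ← mul_assoc, ← ENNReal.ofReal_mul (by positivity),
          ← Real.mul_rpow m.cast_nonneg hs.le, hms]
    _ ≤ m ^ d * (ENNReal.ofReal (s ^ α) * (m ^ d * discAmalgam d f q p s)) := by
        gcongr
        exact discAmalgam_mul_le hq hp hf hs hm0
    _ = m ^ (2 * d) * (ENNReal.ofReal (s ^ α) * discAmalgam d f q p s) := by ring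
    _ ≤ m ^ (2 * d) * contAmalgam d f q p r := by
        gcongr
        exact rpow_mul_discAmalgam_le_contAmalgam hp hs hr hsr

end Amalgam

/-- equivalence of the continuous and discrete amalgam norms,
`C⁻¹ r^{d/p} ‖f‖~_{q,p,r} ≤ ‖f‖_{q,p,r} ≤ C r^{d/p} ‖f‖~_{q,p,r}`. -/
theorem continuous_discrete_amalgam_equiv (d : ℕ) (q p : ℝ≥0∞) (hq : 1 ≤ q) (hp : 1 ≤ p) :
    ∃ C : ℝ, 0 < C ∧ ∀ r : ℝ, 0 < r → ∀ f : Rd d → ℂ, Measurable f →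
      ENNReal.ofReal (C⁻¹ * r ^ ((d : ℝ) * (1 / p).toReal)) * discAmalgam d f q p r ≤
          contAmalgam d f q p r ∧
        contAmalgam d f q p r ≤
          ENNReal.ofReal (C * r ^ ((d : ℝ) * (1 / p).toReal)) * discAmalgam d f q p r := by
  obtain ⟨m, hm⟩ := exists_nat_gt √d
  have hm0 : 0 < m := by exact_mod_cast (Real.sqrt_nonneg _).trans_lt hm
  have hdm : (d : ℝ) < m ^ 2 := (Real.sqrt_lt' (by positivity)).1 hm
  set C : ℕ := 3 ^ d * m ^ (2 * d)
  have hC : (0 : ℝ≥0∞) < C := by positivity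
  refine ⟨C, by exact_mod_cast hC, fun r hr f hf => ⟨?_, ?_⟩⟩
  · rw [ENNReal.ofReal_mul (by positivity), ENNReal.ofReal_inv_of_pos (by exact_mod_cast hC),
      ENNReal.ofReal_natCast, mul_assoc, ENNReal.inv_mul_le_iff hC.ne' (by simp)]
    refine (rpow_mul_discAmalgam_le_contAmalgam_of_lt_sq hq hp hf.aestronglyMeasurable hr
      hdm).trans ?_
    gcongr
    push_cast [C]
    exact le_mul_of_one_le_left' (one_le_pow₀ (by norm_num))
  · rw [ENNReal.ofReal_mul (by positivity), ENNReal.ofReal_natCast, mul_assoc]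
    refine (contAmalgam_le_discAmalgam hq hp hf.aestronglyMeasurable hr).trans ?_
    gcongr
    push_cast [C]
    exact le_mul_of_one_le_right' (one_le_pow₀ (by exact_mod_cast hm0))
end
end

section
/- Let $1 \le q \le p_1 \le p_2 \le \infty$ and $\phi \in \mathcal{G}_{q,p_1}$. Then there exists a constant $C > 0$ such that for every measurable function $f : \mathbb{R}^d \to \mathbb{C}$, $\|f\|_{(L^{q},L^{p_2})^\phi} \le C\, \|f\|_{(L^{q},L^{p_1})^\phi}$; consequently $(L^{q},L^{p_1})^\phi(\mathbb{R}^d) \subset (L^{q},L^{p_2})^\phi(\mathbb{R}^d)$. -/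
open MeasureTheory ENNReal Set Metric Filter

noncomputable section

lemma my_vol_ball (d : ℕ) (y : Rd d) {r : ℝ} (hr : 0 < r) :
    volume (ball y r) = ENNReal.ofReal (r ^ d) * volume (ball (0 : Rd d) 1) := by
  rcases Nat.eq_zero_or_pos d with hd | hd
  · subst hd
    have h1 : ball y r = univ := by
      ext x; simp only [mem_ball, mem_univ, iff_true]
      have : x = y := Subsingleton.elim x y
      simp [this, hr]
    have h2 : ball (0 : Rd 0) 1 = univ := by
      ext x; simp only [mem_ball, mem_univ, iff_true]
      have : x = (0 : Rd 0) := Subsingleton.elim _ _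
      simp [this]
    rw [h1, h2]; simp
  · have : Nonempty (Fin d) := ⟨⟨0, hd⟩⟩
    rw [Measure.addHaar_ball volume y hr.le, finrank_euclideanSpace_fin]

lemma my_indicator_mono {d : ℕ} (f : Rd d → ℂ) (q : ℝ≥0∞) {y y' : Rd d} {r : ℝ}
    (h : y' ∈ ball y r) :
    eLpNorm ((ball y r).indicator f) q volume ≤ eLpNorm ((ball y' (2*r)).indicator f) q volume := by
  apply eLpNorm_mono
  intro x
  by_cases hx : x ∈ ball y r
  · have hx' : x ∈ ball y' (2*r) := by
      rw [mem_ball] at *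
      calc dist x y' ≤ dist x y + dist y y' := dist_triangle _ _ _
        _ < r + r := add_lt_add hx (by rwa [dist_comm] at h)
        _ = 2*r := by ring
    simp [Set.indicator_of_mem hx, Set.indicator_of_mem hx']
  · simp [Set.indicator_of_notMem hx]

lemma my_sup_bound {d : ℕ} (f : Rd d → ℂ) (q : ℝ≥0∞) {t r : ℝ} (ht : 0 < t) (hr : 0 < r)
    (y : Rd d) :
    eLpNorm ((ball y r).indicator f) q volume
      ≤ (volume (ball y r)) ^ (-(1/t)) *
        (∫⁻ y', (eLpNorm ((ball y' (2*r)).indicator f) q volume) ^ t) ^ (1/t) := by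
  set N : Rd d → ℝ≥0∞ := fun y' => eLpNorm ((ball y' (2*r)).indicator f) q volume with hN
  set c : ℝ≥0∞ := eLpNorm ((ball y r).indicator f) q volume with hc
  set V := volume (ball y r) with hV
  have hV0 : V ≠ 0 := (measure_ball_pos volume y hr).ne'
  have hVt : V ≠ ⊤ := measure_ball_lt_top.ne
  have key : c ^ t * V ≤ ∫⁻ y', N y' ^ t := by
    have h1 : c ^ t * V = ∫⁻ y', (ball y r).indicator (fun _ => c ^ t) y' := by
      rw [lintegral_indicator measurableSet_ball, setLIntegral_const]
    rw [h1]
    apply lintegral_mono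
    intro y'
    by_cases hy' : y' ∈ ball y r
    · rw [Set.indicator_of_mem hy']
      exact ENNReal.rpow_le_rpow (my_indicator_mono f q hy') ht.le
    · simp [Set.indicator_of_notMem hy']
  have h2 : c ^ t ≤ (∫⁻ y', N y' ^ t) / V := by
    rw [ENNReal.le_div_iff_mul_le (Or.inl hV0) (Or.inl hVt)]
    exact key
  have h3 : c = (c ^ t) ^ (1/t) := by
    rw [← ENNReal.rpow_mul, mul_one_div, div_self ht.ne', ENNReal.rpow_one]
  rw [h3]
  calc (c ^ t) ^ (1/t) ≤ ((∫⁻ y', N y' ^ t) / V) ^ (1/t) :=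
        ENNReal.rpow_le_rpow h2 (by positivity)
    _ = V ^ (-(1/t)) * (∫⁻ y', N y' ^ t) ^ (1/t) := by
        rw [ENNReal.div_eq_inv_mul, ENNReal.mul_rpow_of_nonneg _ _ (by positivity),
          ENNReal.rpow_neg, ENNReal.inv_rpow]

lemma my_interp {α : Type*} [MeasurableSpace α] (μ : Measure α) (g : α → ℝ≥0∞) {M : ℝ≥0∞}
    (hM : M ≠ ⊤) (hg : ∀ x, g x ≤ M) {t s : ℝ} (ht : 0 < t) (hts : t ≤ s) :
    (∫⁻ x, g x ^ s ∂μ) ^ (1/s) ≤ M ^ ((s-t)/s) * ((∫⁻ x, g x ^ t ∂μ) ^ (1/t)) ^ (t/s) := by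
  have hs : 0 < s := lt_of_lt_of_le ht hts
  have h1 : (∫⁻ x, g x ^ s ∂μ) ≤ M ^ (s-t) * ∫⁻ x, g x ^ t ∂μ := by
    rw [← lintegral_const_mul' _ _ (ENNReal.rpow_ne_top_of_nonneg (by linarith) hM)]
    apply lintegral_mono
    intro x
    calc g x ^ s = g x ^ (s - t) * g x ^ t := by
          rw [← ENNReal.rpow_add_of_nonneg _ _ (by linarith) ht.le]; ring_nf
      _ ≤ M ^ (s-t) * g x ^ t := by
          have := hg x
          gcongr
  calc (∫⁻ x, g x ^ s ∂μ) ^ (1/s) ≤ (M ^ (s-t) * ∫⁻ x, g x ^ t ∂μ) ^ (1/s) :=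
        ENNReal.rpow_le_rpow h1 (by positivity)
    _ = M ^ ((s-t)/s) * ((∫⁻ x, g x ^ t ∂μ) ^ (1/t)) ^ (t/s) := by
        rw [ENNReal.mul_rpow_of_nonneg _ _ (by positivity), ← ENNReal.rpow_mul]
        congr 1
        · rw [mul_one_div]
        · rw [← ENNReal.rpow_mul]
          congr 1
          field_simp


lemma my_scalar {d : ℕ} {a b₁ b₂ θ v C₀ r P P₂ : ℝ}
    (ha : 0 ≤ a) (hb₁ : 0 ≤ b₁) (hθeq : θ * b₁ = b₂) (hθ0 : 0 ≤ θ) (hθ1 : θ ≤ 1)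
    (hv : 0 < v) (hC₀ : 0 < C₀) (hr : 0 < r) (hP : 0 < P) (hP₂ : 0 < P₂)
    (hPP : P₂ ≤ C₀ * P) :
    (P⁻¹ * r ^ ((d:ℝ) * (-a - b₂))) *
      ((r ^ (d:ℝ) * v) ^ (-b₁) * (P₂ * (2*r) ^ ((d:ℝ)*(a+b₁)))) ^ (1-θ) *
       (P * r ^ ((d:ℝ)*(a+b₁))) ^ θ
      ≤ v ^ (-b₁*(1-θ)) * 2 ^ ((d:ℝ)*(a+b₁)*(1-θ)) * C₀ ^ (1-θ) := by
  subst hθeq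
  have h2r : (0:ℝ) < 2*r := by linarith
  have hlog : Real.log P₂ ≤ Real.log C₀ + Real.log P := by
    rw [← Real.log_mul hC₀.ne' hP.ne']
    exact Real.log_le_log hP₂ hPP
  rw [← Real.log_le_log_iff (by positivity) (by positivity)]
  rw [show (2*r) ^ ((d:ℝ)*(a+b₁)) = 2 ^ ((d:ℝ)*(a+b₁)) * r ^ ((d:ℝ)*(a+b₁)) from
    Real.mul_rpow (by norm_num) hr.le]
  simp (disch := positivity) only [Real.log_mul, Real.log_rpow, Real.log_inv]
  nlinarith [mul_nonneg (sub_nonneg.mpr hθ1) (by linarith : (0:ℝ) ≤ Real.log C₀ + Real.log P - Real.log P₂)]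

/-- for `q ≤ p₁ ≤ p₂` and `φ ∈ 𝒢_{q,p₁}`,
`‖f‖_{(L^q,L^{p₂})^φ} ≲ ‖f‖_{(L^q,L^{p₁})^φ}`, hence
`(L^q,L^{p₁})^φ(ℝ^d) ⊆ (L^q,L^{p₂})^φ(ℝ^d)`. -/
theorem fofanaNorm_mono_outer (d : ℕ) (q p₁ p₂ : ℝ≥0∞)
    (hq : 1 ≤ q) (hqp₁ : q ≤ p₁) (hp₁₂ : p₁ ≤ p₂)
    (φ : ℝ → ℝ) (hφ : IsGqp d q p₁ φ) :
    ∃ C : ℝ, 0 < C ∧ ∀ f : Rd d → ℂ, Measurable f →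
      fofanaNorm d f q p₂ φ ≤ ENNReal.ofReal C * fofanaNorm d f q p₁ φ ∧
        (fofanaNorm d f q p₁ φ < ⊤ → fofanaNorm d f q p₂ φ < ⊤) := by
  rcases eq_or_lt_of_le hp₁₂ with rfl | hlt
  · exact ⟨1, one_pos, fun f _ => ⟨by simp, fun h => by simpa using h⟩⟩
  -- main case : p₁ < p₂
  have hp₁top : p₁ ≠ ⊤ := (hlt.trans_le le_top).ne
  have hp₁0 : p₁ ≠ 0 := by
    intro h; rw [h] at hqp₁; simp at hqp₁; rw [hqp₁] at hq; simp at hq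
  have ht1 : (1:ℝ) ≤ p₁.toReal := by
    have := ENNReal.toReal_mono hp₁top (hq.trans hqp₁); simpa using this
  have ht : (0:ℝ) < p₁.toReal := lt_of_lt_of_le one_pos ht1
  have htb : p₁.toReal * (1/p₁).toReal = 1 := by
    rw [one_div, ENNReal.toReal_inv]; exact mul_inv_cancel₀ ht.ne'
  have hb₂₁ : (1/p₂).toReal ≤ (1/p₁).toReal := by
    apply ENNReal.toReal_mono
    · simp [hp₁0]
    · gcongr
  set θ := p₁.toReal * (1/p₂).toReal with hθdef
  have hθ0 : 0 ≤ θ := mul_nonneg ht.le ENNReal.toReal_nonneg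
  have hθ1 : θ ≤ 1 := by
    rw [hθdef, ← htb]
    exact mul_le_mul_of_nonneg_left hb₂₁ ht.le
  have hθb : θ * (1/p₁).toReal = (1/p₂).toReal := by
    rw [hθdef, mul_comm p₁.toReal, mul_assoc, htb, mul_one]
  -- volume constant
  have hv₁0 : volume (ball (0 : Rd d) 1) ≠ 0 := (measure_ball_pos volume _ one_pos).ne'
  have hv₁top : volume (ball (0 : Rd d) 1) ≠ ⊤ := measure_ball_lt_top.ne
  set v := (volume (ball (0 : Rd d) 1)).toReal with hvdef
  have hv : 0 < v := ENNReal.toReal_pos hv₁0 hv₁top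
  have hv₁ : volume (ball (0 : Rd d) 1) = ENNReal.ofReal v := (ENNReal.ofReal_toReal hv₁top).symm
  -- φ doubling
  obtain ⟨C₀, hC₀, hdec⟩ := hφ.almost_decreasing
  have hφ2 : ∀ r : ℝ, 0 < r → φ (2*r) ≤ C₀ * φ r := by
    intro r hr
    have h := hdec r (2*r) hr (by linarith)
    have he : 0 ≤ (d:ℝ) * (1/p₁).toReal := by positivity
    have h1 : r ^ ((d:ℝ) * (1/p₁).toReal) ≤ (2*r) ^ ((d:ℝ) * (1/p₁).toReal) :=
      Real.rpow_le_rpow hr.le (by linarith) he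
    have hrp : 0 < r ^ ((d:ℝ) * (1/p₁).toReal) := Real.rpow_pos_of_pos hr _
    have hφ2r := hφ.pos (2*r) (by linarith)
    have hchain : φ (2*r) * r ^ ((d:ℝ) * (1/p₁).toReal)
        ≤ (C₀ * φ r) * r ^ ((d:ℝ) * (1/p₁).toReal) := by
      calc φ (2*r) * r ^ ((d:ℝ) * (1/p₁).toReal)
          ≤ φ (2*r) * (2*r) ^ ((d:ℝ) * (1/p₁).toReal) :=
            mul_le_mul_of_nonneg_left h1 hφ2r.le
        _ = (2*r) ^ ((d:ℝ) * (1/p₁).toReal) * φ (2*r) := mul_comm _ _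
        _ ≤ C₀ * (r ^ ((d:ℝ) * (1/p₁).toReal) * φ r) := h
        _ = (C₀ * φ r) * r ^ ((d:ℝ) * (1/p₁).toReal) := by ring
    exact le_of_mul_le_mul_right hchain hrp
  refine ⟨v ^ (-(1/p₁).toReal*(1-θ)) * 2 ^ ((d:ℝ)*((1/q).toReal+(1/p₁).toReal)*(1-θ))
      * C₀ ^ (1-θ), by positivity, ?_⟩
  intro f _
  set C := v ^ (-(1/p₁).toReal*(1-θ)) * 2 ^ ((d:ℝ)*((1/q).toReal+(1/p₁).toReal)*(1-θ))
      * C₀ ^ (1-θ) with hCdef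
  have hC : 0 < C := by rw [hCdef]; positivity
  set F := fofanaNorm d f q p₁ φ with hFdef
  have main : fofanaNorm d f q p₂ φ ≤ ENNReal.ofReal C * F := by
    by_cases hF : F = ⊤
    · rw [hF, ENNReal.mul_top (ENNReal.ofReal_pos.mpr hC).ne']
      exact le_top
    -- F finite
    have hA : ∀ ρ : ℝ, 0 < ρ → contAmalgam d f q p₁ ρ ≤
        ENNReal.ofReal (φ ρ * ρ ^ ((d:ℝ) * ((1/q).toReal + (1/p₁).toReal))) * F := by
      intro ρ hρ
      have h0 : ENNReal.ofReal ((φ ρ)⁻¹ * ρ ^ ((d:ℝ) * (-(1/q).toReal - (1/p₁).toReal))) *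
          contAmalgam d f q p₁ ρ ≤ F := by
        rw [hFdef, fofanaNorm]
        exact le_iSup (fun r : {r : ℝ // 0 < r} =>
          ENNReal.ofReal ((φ r)⁻¹ * (r:ℝ) ^ ((d:ℝ) * (-(1/q).toReal - (1/p₁).toReal))) *
            contAmalgam d f q p₁ r) ⟨ρ, hρ⟩
      have hφρ := hφ.pos ρ hρ
      have hc : 0 < (φ ρ)⁻¹ * ρ ^ ((d:ℝ) * (-(1/q).toReal - (1/p₁).toReal)) := by positivity
      have hcinv : ((φ ρ)⁻¹ * ρ ^ ((d:ℝ) * (-(1/q).toReal - (1/p₁).toReal)))⁻¹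
          = φ ρ * ρ ^ ((d:ℝ) * ((1/q).toReal + (1/p₁).toReal)) := by
        rw [mul_inv, inv_inv, ← Real.rpow_neg hρ.le]
        ring_nf
      calc contAmalgam d f q p₁ ρ
          = ENNReal.ofReal (((φ ρ)⁻¹ * ρ ^ ((d:ℝ) * (-(1/q).toReal - (1/p₁).toReal)))⁻¹) *
            (ENNReal.ofReal ((φ ρ)⁻¹ * ρ ^ ((d:ℝ) * (-(1/q).toReal - (1/p₁).toReal))) *
              contAmalgam d f q p₁ ρ) := by
            rw [← mul_assoc, ← ENNReal.ofReal_mul (by positivity), inv_mul_cancel₀ hc.ne',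
              ENNReal.ofReal_one, one_mul]
        _ ≤ ENNReal.ofReal (((φ ρ)⁻¹ * ρ ^ ((d:ℝ) * (-(1/q).toReal - (1/p₁).toReal)))⁻¹) * F :=
            mul_le_mul_right h0 _
        _ = ENNReal.ofReal (φ ρ * ρ ^ ((d:ℝ) * ((1/q).toReal + (1/p₁).toReal))) * F := by
            rw [hcinv]
    have hAfin : ∀ ρ : ℝ, 0 < ρ → contAmalgam d f q p₁ ρ ≠ ⊤ := fun ρ hρ =>
      ne_top_of_le_ne_top (ENNReal.mul_ne_top ENNReal.ofReal_ne_top hF) (hA ρ hρ)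
    rw [fofanaNorm]
    apply iSup_le
    rintro ⟨r, hr⟩
    simp only
    -- the pointwise sup bound
    set M := ENNReal.ofReal ((r ^ (d:ℝ) * v) ^ (-(1/p₁).toReal)) *
        contAmalgam d f q p₁ (2*r) with hMdef
    have hMfin : M ≠ ⊤ := ENNReal.mul_ne_top ENNReal.ofReal_ne_top (hAfin (2*r) (by linarith))
    have hMy : ∀ y : Rd d, eLpNorm ((ball y r).indicator f) q volume ≤ M := by
      intro y
      have hb := my_sup_bound f q ht hr y
      have hvol : (volume (ball y r)) ^ (-(1/p₁.toReal))
          = ENNReal.ofReal ((r ^ (d:ℝ) * v) ^ (-(1/p₁).toReal)) := by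
        rw [my_vol_ball d y hr, hv₁, ← ENNReal.ofReal_mul (by positivity),
          ENNReal.ofReal_rpow_of_pos (by positivity)]
        congr 2
        · rw [Real.rpow_natCast]
        · simp [ENNReal.toReal_inv]
      have hAm : contAmalgam d f q p₁ (2*r)
          = (∫⁻ y', (eLpNorm ((ball y' (2*r)).indicator f) q volume) ^ p₁.toReal) ^
              (1/p₁.toReal) := by
        rw [contAmalgam, eLpNormE, if_neg hp₁top]
      rw [hMdef, hAm, ← hvol]
      exact hb
    -- interpolation step
    have hkey : contAmalgam d f q p₂ r ≤ M ^ (1-θ) * (contAmalgam d f q p₁ r) ^ θ := by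
      by_cases hp₂top : p₂ = ⊤
      · have hθz : θ = 0 := by
          rw [hθdef, hp₂top]; simp
        rw [hθz, ENNReal.rpow_zero, mul_one, sub_zero, ENNReal.rpow_one]
        rw [contAmalgam, eLpNormE, if_pos hp₂top]
        exact essSup_le_of_ae_le M (Filter.Eventually.of_forall hMy)
      · have hs : 0 < p₂.toReal := by
          have := ENNReal.toReal_mono hp₂top (hq.trans (hqp₁.trans hp₁₂))
          simp at this; linarith
        have hts : p₁.toReal ≤ p₂.toReal := ENNReal.toReal_mono hp₂top hp₁₂
        have hθs : θ = p₁.toReal / p₂.toReal := by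
          rw [hθdef, one_div, ENNReal.toReal_inv, div_eq_mul_inv]
        have h1θ : 1 - θ = (p₂.toReal - p₁.toReal) / p₂.toReal := by
          rw [hθs]; field_simp
        rw [contAmalgam, eLpNormE, if_neg hp₂top, h1θ, hθs]
        have hAr : contAmalgam d f q p₁ r
            = (∫⁻ y', (eLpNorm ((ball y' r).indicator f) q volume) ^ p₁.toReal) ^
                (1/p₁.toReal) := by
          rw [contAmalgam, eLpNormE, if_neg hp₁top]
        rw [hAr]
        exact my_interp volume _ hMfin hMy ht hts
    -- bounds on M and A r
    have hM2 : M ≤ ENNReal.ofReal ((r ^ (d:ℝ) * v) ^ (-(1/p₁).toReal) *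
        (φ (2*r) * (2*r) ^ ((d:ℝ) * ((1/q).toReal + (1/p₁).toReal)))) * F := by
      rw [hMdef, ENNReal.ofReal_mul (by positivity), mul_assoc]
      exact mul_le_mul_right (hA (2*r) (by linarith)) _
    have hAr2 : contAmalgam d f q p₁ r ≤
        ENNReal.ofReal (φ r * r ^ ((d:ℝ) * ((1/q).toReal + (1/p₁).toReal))) * F := hA r hr
    have hφr := hφ.pos r hr
    have hφ2r := hφ.pos (2*r) (by linarith)
    set c₂r := (φ r)⁻¹ * r ^ ((d:ℝ) * (-(1/q).toReal - (1/p₂).toReal)) with hc₂def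
    set m₁ := (r ^ (d:ℝ) * v) ^ (-(1/p₁).toReal) *
        (φ (2*r) * (2*r) ^ ((d:ℝ) * ((1/q).toReal + (1/p₁).toReal))) with hm₁def
    set w₁ := φ r * r ^ ((d:ℝ) * ((1/q).toReal + (1/p₁).toReal)) with hw₁def
    have hm₁pos : 0 < m₁ := by rw [hm₁def]; positivity
    have hw₁pos : 0 < w₁ := by rw [hw₁def]; positivity
    have e1 : (ENNReal.ofReal m₁ * F) ^ (1-θ) = ENNReal.ofReal (m₁ ^ (1-θ)) * F ^ (1-θ) := by
      rw [ENNReal.mul_rpow_of_nonneg _ _ (by linarith), ENNReal.ofReal_rpow_of_pos hm₁pos]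
    have e2 : (ENNReal.ofReal w₁ * F) ^ θ = ENNReal.ofReal (w₁ ^ θ) * F ^ θ := by
      rw [ENNReal.mul_rpow_of_nonneg _ _ hθ0, ENNReal.ofReal_rpow_of_pos hw₁pos]
    have e3 : F ^ (1-θ) * F ^ θ = F := by
      rw [← ENNReal.rpow_add_of_nonneg _ _ (by linarith) hθ0]
      norm_num
    calc ENNReal.ofReal c₂r * contAmalgam d f q p₂ r
        ≤ ENNReal.ofReal c₂r * (M ^ (1-θ) * (contAmalgam d f q p₁ r) ^ θ) :=
          mul_le_mul_right hkey _
      _ ≤ ENNReal.ofReal c₂r * ((ENNReal.ofReal m₁ * F) ^ (1-θ) *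
            (ENNReal.ofReal w₁ * F) ^ θ) := by
          refine mul_le_mul_right (mul_le_mul' ?_ ?_) _
          · exact ENNReal.rpow_le_rpow hM2 (by linarith)
          · exact ENNReal.rpow_le_rpow hAr2 hθ0
      _ = (ENNReal.ofReal c₂r * ENNReal.ofReal (m₁ ^ (1-θ)) * ENNReal.ofReal (w₁ ^ θ)) *
            (F ^ (1-θ) * F ^ θ) := by
          rw [e1, e2]; ring
      _ = ENNReal.ofReal (c₂r * m₁ ^ (1-θ) * w₁ ^ θ) * F := by
          rw [e3, ← ENNReal.ofReal_mul (by positivity), ← ENNReal.ofReal_mul (by positivity)]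
      _ ≤ ENNReal.ofReal C * F := by
          gcongr
          rw [hCdef, hc₂def, hm₁def, hw₁def]
          exact my_scalar ENNReal.toReal_nonneg ENNReal.toReal_nonneg hθb hθ0 hθ1 hv hC₀
            hr hφr hφ2r (hφ2 r hr)
  refine ⟨main, fun hlt' => lt_of_le_of_lt main ?_⟩
  exact ENNReal.mul_lt_top ENNReal.ofReal_lt_top hlt'
end
end

section
/- Let $1 \le q \le p \le \infty$ and $\phi \in \mathcal{G}_{q,p}$. There exists a constant $c > 0$ such that for every $r_0 > 0$, $\frac{c}{\phi(r_0)} \le \big\| \chi_{B(0,r_0)} \big\|_{(L^q,L^p)^\phi}$, where $\chi_{B(0,r_0)}$ is the characteristic function of the Euclidean ball $B(0,r_0) \subset \mathbb{R}^d$. -/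
open MeasureTheory ENNReal Set Metric Filter

noncomputable section

/-! If `|y| < r₀/2`, then `B(y, r₀/2) ⊆ B(y, r₀) ∩ B(0, r₀)`, so the inner `L^q` norm of
`χ_{B(0,r₀)} χ_{B(y,r₀)}` is at least `|B(0,r₀/2)|^{1/q}` on a set of measure `|B(0,r₀/2)|`.
Hence the amalgam norm at radius `r₀` is at least
`|B(0,r₀/2)|^{1/q+1/p} = r₀^{d(1/q+1/p)} |B(0,1/2)|^{1/q+1/p}`, and evaluating the supremum
defining the Fofana norm at `r = r₀` cancels the power of `r₀`. -/

lemma mul_measure_rpow_le_eLpNormE {α : Type*} [MeasurableSpace α] {μ : Measure α}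
    {g : α → ℝ≥0∞} {p : ℝ≥0∞} (hp : p ≠ 0) {S : Set α} (hS : MeasurableSet S) (hS0 : μ S ≠ 0)
    {K : ℝ≥0∞} (hg : ∀ y ∈ S, K ≤ g y) :
    K * μ S ^ (1 / p).toReal ≤ eLpNormE g p μ := by
  unfold eLpNormE
  split_ifs with hp_top
  · have hμS : μ.restrict S ≠ 0 := by simpa [Measure.restrict_eq_zero] using hS0
    calc K * μ S ^ (1 / p).toReal = essSup (fun _ => K) (μ.restrict S) := by
          simp [hp_top, essSup_const _ hμS]
      _ ≤ essSup g (μ.restrict S) := essSup_mono_ae (ae_restrict_of_forall_mem hS hg)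
      _ ≤ essSup g μ := essSup_mono_measure' Measure.restrict_le_self
  · have hpR : 0 < p.toReal := ENNReal.toReal_pos hp hp_top
    have hlint : K ^ p.toReal * μ S ≤ ∫⁻ x, g x ^ p.toReal ∂μ :=
      calc K ^ p.toReal * μ S = ∫⁻ _ in S, K ^ p.toReal ∂μ := (setLIntegral_const _ _).symm
        _ ≤ ∫⁻ x in S, g x ^ p.toReal ∂μ :=
          setLIntegral_mono' hS fun x hx => ENNReal.rpow_le_rpow (hg x hx) hpR.le
        _ ≤ ∫⁻ x, g x ^ p.toReal ∂μ := setLIntegral_le_lintegral _ _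
    calc K * μ S ^ (1 / p).toReal = (K ^ p.toReal * μ S) ^ (1 / p.toReal) := by
          rw [ENNReal.mul_rpow_of_nonneg _ _ (by positivity), ← ENNReal.rpow_mul,
            mul_one_div_cancel hpR.ne', ENNReal.rpow_one, one_div p, ENNReal.toReal_inv, one_div]
      _ ≤ _ := ENNReal.rpow_le_rpow hlint (by positivity)

lemma volume_ball_rpow_le_eLpNorm_indicator_ball {d : ℕ} {q : ℝ≥0∞} (hq : q ≠ 0) {r : ℝ}
    {y : Rd d} (hy : y ∈ ball (0 : Rd d) (r / 2)) :
    volume (ball (0 : Rd d) (r / 2)) ^ (1 / q).toReal ≤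
      eLpNorm ((ball y r).indicator ((ball (0 : Rd d) r).indicator fun _ => (1 : ℂ))) q volume := by
  have hr : 0 < r / 2 := pos_of_mem_ball hy
  have hsub : ball y (r / 2) ⊆ ball y r ∩ ball 0 r := by
    rw [mem_ball] at hy
    exact subset_inter (ball_subset_ball (by linarith))
      (ball_subset_ball' (by linarith))
  rw [indicator_indicator, ← Measure.addHaar_ball_center volume y]
  calc volume (ball y (r / 2)) ^ (1 / q).toReal
      = eLpNorm ((ball y (r / 2)).indicator fun _ => (1 : ℂ)) q volume := by
        rw [eLpNorm_indicator_const' measurableSet_ball (measure_ball_pos _ _ hr).ne' hq]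
        simp
    _ ≤ _ := eLpNorm_mono fun x => by
        by_cases hx : x ∈ ball y (r / 2)
        · simp [hx, hsub hx]
        · simp [hx]

lemma volume_ball_rpow_le_contAmalgam_indicator_ball {d : ℕ} {q p : ℝ≥0∞} (hq : q ≠ 0)
    (hp : p ≠ 0) {r : ℝ} (hr : 0 < r) :
    volume (ball (0 : Rd d) (r / 2)) ^ ((1 / q).toReal + (1 / p).toReal) ≤
      contAmalgam d ((ball (0 : Rd d) r).indicator fun _ => (1 : ℂ)) q p r := by
  have hV : volume (ball (0 : Rd d) (r / 2)) ≠ 0 := (measure_ball_pos _ _ (half_pos hr)).ne'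
  rw [ENNReal.rpow_add _ _ hV measure_ball_lt_top.ne]
  exact mul_measure_rpow_le_eLpNormE hp measurableSet_ball hV fun y hy =>
    volume_ball_rpow_le_eLpNorm_indicator_ball hq hy

lemma ofReal_rpow_neg_mul_volume_ball_half_rpow {d : ℕ} {r s : ℝ} (hr : 0 < r) (hs : 0 ≤ s) :
    ENNReal.ofReal (r ^ ((d : ℝ) * -s)) * volume (ball (0 : Rd d) (r / 2)) ^ s =
      volume (ball (0 : Rd d) (1 / 2)) ^ s := by
  rw [div_eq_mul_one_div r 2, Measure.addHaar_ball_mul_of_pos volume 0 hr,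
    finrank_euclideanSpace_fin, ENNReal.mul_rpow_of_nonneg _ _ hs,
    ENNReal.ofReal_rpow_of_nonneg (by positivity) hs, ← mul_assoc,
    ← ENNReal.ofReal_mul (by positivity), ← Real.rpow_natCast, ← Real.rpow_mul hr.le,
    ← Real.rpow_add hr, mul_neg, neg_add_cancel, Real.rpow_zero, ENNReal.ofReal_one, one_mul]

/-- lower bound for the Fofana norm of the characteristic function of
a ball: `c / φ(r₀) ≤ ‖χ_{B(0,r₀)}‖_{(L^q,L^p)^φ}`. -/
theorem fofanaNorm_indicator_ball_lower (d : ℕ) (q p : ℝ≥0∞) (hq : 1 ≤ q) (hqp : q ≤ p)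
    (φ : ℝ → ℝ) (hφ : IsGqp d q p φ) :
    ∃ c : ℝ, 0 < c ∧ ∀ r₀ : ℝ, 0 < r₀ →
      ENNReal.ofReal (c / φ r₀) ≤
        fofanaNorm d ((Metric.ball (0 : Rd d) r₀).indicator fun _ => (1 : ℂ)) q p φ := by
  have hq0 : q ≠ 0 := (zero_lt_one.trans_le hq).ne'
  have hp0 : p ≠ 0 := (zero_lt_one.trans_le (hq.trans hqp)).ne'
  set s := (1 / q).toReal + (1 / p).toReal
  have hs : 0 ≤ s := by positivity
  set c := volume (ball (0 : Rd d) (1 / 2)) ^ s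
  have hc_top : c ≠ ∞ := ENNReal.rpow_ne_top_of_nonneg hs measure_ball_lt_top.ne
  have hc_pos : 0 < c :=
    ENNReal.rpow_pos (measure_ball_pos _ _ (by norm_num)) measure_ball_lt_top.ne
  refine ⟨c.toReal, ENNReal.toReal_pos hc_pos.ne' hc_top, fun r₀ hr₀ => ?_⟩
  calc ENNReal.ofReal (c.toReal / φ r₀)
      = ENNReal.ofReal (φ r₀)⁻¹ * c := by
        rw [div_eq_inv_mul, ENNReal.ofReal_mul (inv_nonneg.2 (hφ.pos r₀ hr₀).le),
          ENNReal.ofReal_toReal hc_top]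
    _ = ENNReal.ofReal ((φ r₀)⁻¹ * r₀ ^ ((d : ℝ) * (-(1 / q).toReal - (1 / p).toReal))) *
          volume (ball (0 : Rd d) (r₀ / 2)) ^ s := by
        rw [← neg_add', ENNReal.ofReal_mul (inv_nonneg.2 (hφ.pos r₀ hr₀).le), mul_assoc,
          ofReal_rpow_neg_mul_volume_ball_half_rpow hr₀ hs]
    _ ≤ ENNReal.ofReal ((φ r₀)⁻¹ * r₀ ^ ((d : ℝ) * (-(1 / q).toReal - (1 / p).toReal))) *
          contAmalgam d ((ball (0 : Rd d) r₀).indicator fun _ => (1 : ℂ)) q p r₀ := by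
        gcongr
        exact volume_ball_rpow_le_contAmalgam_indicator_ball hq0 hp0 hr₀
    _ ≤ _ := le_iSup_of_le (⟨r₀, hr₀⟩ : {r : ℝ // 0 < r}) le_rfl
end
end

section
/- Let $1 \le q \le p \le \infty$ and $\phi \in \mathcal{G}_{q,p}$. There exists a constant $C > 0$ such that for every $r_0 > 0$, $\big\| \chi_{B(0,r_0)} \big\|_{(L^q,L^p)^\phi} \le \frac{C}{\phi(r_0)}$, where $\chi_{B(0,r_0)}$ is the characteristic function of the Euclidean ball $B(0,r_0) \subset \mathbb{R}^d$. In particular, $\chi_{B(0,r_0)} \in (L^q,L^p)^\phi(\mathbb{R}^d)$. -/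
open MeasureTheory ENNReal Set Metric Filter

noncomputable section

section AuxFofana

lemma volume_ball_Rd (d : ℕ) (x : Rd d) {ρ : ℝ} (hρ : 0 < ρ) :
    volume (ball x ρ) = ENNReal.ofReal (ρ ^ d) * volume (ball (0 : Rd d) 1) := by
  rcases Nat.eq_zero_or_pos d with hd | hd
  · subst hd
    have hsub : Subsingleton (Rd 0) := by
      constructor; intro a b; ext i; exact absurd i.2 (by simp)
    have h1 : ∀ (y : Rd 0) (s : ℝ), 0 < s → ball y s = univ := by
      intro y s hs
      ext z; simp [Metric.ball, show z = y from hsub.1 z y, hs]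
    rw [h1 x ρ hρ, h1 0 1 one_pos]
    simp
  · haveI : Nontrivial (Rd d) := by
      have : Nonempty (Fin d) := ⟨⟨0, hd⟩⟩
      infer_instance
    rw [Measure.addHaar_ball volume x hρ.le]
    congr 2
    simp

lemma eLpNormE_le_of_le_indicator {α : Type*} [MeasurableSpace α] {μ : Measure α}
    {g : α → ℝ≥0∞} {s : Set α} (hs : MeasurableSet s) (A : ℝ≥0∞)
    (hg : ∀ x, g x ≤ s.indicator (fun _ => A) x) {p : ℝ≥0∞} (hp : 1 ≤ p) :
    eLpNormE g p μ ≤ A * μ s ^ (1 / p).toReal := by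
  have hp0 : p ≠ 0 := by intro h; simp [h] at hp
  rcases eq_or_ne p ∞ with hptop | hptop
  · rw [eLpNormE, if_pos hptop, hptop]
    have h0 : (1 / (⊤:ℝ≥0∞)).toReal = 0 := by simp
    rw [h0, ENNReal.rpow_zero, mul_one]
    refine essSup_le_of_ae_le A (Filter.Eventually.of_forall fun x => ?_)
    refine (hg x).trans ?_
    by_cases hx : x ∈ s <;> simp [hx]
  · have hc : 0 < p.toReal := ENNReal.toReal_pos hp0 hptop
    rw [eLpNormE, if_neg hptop]
    have h1 : ∫⁻ x, g x ^ p.toReal ∂μ ≤ A ^ p.toReal * μ s := by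
      rw [← lintegral_indicator_const hs]
      refine lintegral_mono fun x => ?_
      have := hg x
      by_cases hx : x ∈ s
      · simp only [indicator_of_mem hx] at this ⊢
        exact ENNReal.rpow_le_rpow this hc.le
      · simp only [indicator_of_notMem hx] at this ⊢
        simp [le_zero_iff.mp this, ENNReal.zero_rpow_of_pos hc]
    calc (∫⁻ x, g x ^ p.toReal ∂μ) ^ (1 / p.toReal)
        ≤ (A ^ p.toReal * μ s) ^ (1 / p.toReal) :=
          ENNReal.rpow_le_rpow h1 (by positivity)
      _ = A * μ s ^ (1 / p).toReal := by
          rw [ENNReal.mul_rpow_of_nonneg _ _ (by positivity),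
            ← ENNReal.rpow_mul, mul_one_div, div_self hc.ne', ENNReal.rpow_one]
          congr 1
          rw [one_div, one_div, ENNReal.toReal_inv]

lemma inner_bound_aux (d : ℕ) {q : ℝ≥0∞} (hq : 1 ≤ q) {r r₀ : ℝ} (hr : 0 < r) (hr₀ : 0 < r₀)
    (y : Rd d) :
    eLpNorm ((ball y r).indicator ((ball (0 : Rd d) r₀).indicator fun _ => (1 : ℂ))) q volume
      ≤ (ball (0 : Rd d) (r + r₀)).indicator
          (fun _ => volume (ball (0 : Rd d) (min r r₀)) ^ (1 / q).toReal) y := by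
  have hq0 : q ≠ 0 := by intro h; simp [h] at hq
  rw [Set.indicator_indicator]
  by_cases hy : y ∈ ball (0 : Rd d) (r + r₀)
  · rw [indicator_of_mem hy]
    rcases eq_or_ne q ∞ with hqtop | hqtop
    · have h1 : eLpNorm ((ball y r ∩ ball (0 : Rd d) r₀).indicator fun _ => (1 : ℂ)) q volume
          ≤ eLpNorm (fun _ : Rd d => (1 : ℂ)) q volume := eLpNorm_indicator_le _
      have h2 : eLpNorm (fun _ : Rd d => (1 : ℂ)) q volume = 1 := by
        rw [hqtop, eLpNorm_exponent_top, eLpNormEssSup_const _ (NeZero.ne _)]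
        simp
      have h3 : (1 / q).toReal = 0 := by rw [hqtop]; simp
      rw [h3, ENNReal.rpow_zero]
      exact h1.trans_eq h2
    · rw [eLpNorm_indicator_const (measurableSet_ball.inter measurableSet_ball) hq0 hqtop]
      have hvol : volume (ball y r ∩ ball (0 : Rd d) r₀)
          ≤ volume (ball (0 : Rd d) (min r r₀)) := by
        rcases min_cases r r₀ with ⟨hm, hle⟩ | ⟨hm, hle⟩
        · rw [hm, ← Measure.addHaar_ball_center volume y r]
          exact measure_mono inter_subset_left
        · rw [hm]
          exact measure_mono inter_subset_right
      have hexp : 1 / q.toReal = (1 / q).toReal := by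
        rw [one_div, one_div, ENNReal.toReal_inv]
      rw [← hexp]
      simpa using ENNReal.rpow_le_rpow hvol (by positivity)
  · rw [indicator_of_notMem hy]
    have hempty : ball y r ∩ ball (0 : Rd d) r₀ = ∅ := by
      ext x
      simp only [mem_inter_iff, mem_ball, mem_empty_iff_false, iff_false, not_and]
      intro hx1 hx2
      apply hy
      rw [mem_ball]
      calc dist y 0 ≤ dist y x + dist x 0 := dist_triangle _ _ _
        _ < r + r₀ := add_lt_add (by rwa [dist_comm]) hx2
    rw [hempty]
    simp [eLpNorm_zero]

lemma core_real_aux {A B : ℝ} (hB : 0 ≤ B) (φ : ℝ → ℝ)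
    (hpos : ∀ t : ℝ, 0 < t → 0 < φ t) {C₁ C₂ : ℝ}
    (hdec : ∀ r s : ℝ, 0 < r → r ≤ s → s ^ B * φ s ≤ C₁ * (r ^ B * φ r))
    (hinc : ∀ r s : ℝ, 0 < r → r ≤ s → r ^ A * φ r ≤ C₂ * (s ^ A * φ s))
    {r r₀ : ℝ} (hr : 0 < r) (hr₀ : 0 < r₀) :
    (φ r)⁻¹ * r ^ (-A - B) * (min r r₀ ^ A * (r + r₀) ^ B)
      ≤ (2 : ℝ) ^ B * max C₁ C₂ / φ r₀ := by
  have hP : 0 < φ r := hpos r hr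
  have hQ : 0 < φ r₀ := hpos r₀ hr₀
  have hx : (0:ℝ) < r ^ A := Real.rpow_pos_of_pos hr A
  have hy : (0:ℝ) < r ^ B := Real.rpow_pos_of_pos hr B
  have h2B : (0:ℝ) < 2 ^ B := Real.rpow_pos_of_pos two_pos B
  have hsplit : r ^ (-A - B) = (r ^ A)⁻¹ * (r ^ B)⁻¹ := by
    rw [show -A - B = -(A + B) by ring, Real.rpow_neg hr.le, Real.rpow_add hr, mul_inv]
  rw [le_div_iff₀ hQ, hsplit]
  rcases le_total r r₀ with hle | hle
  · rw [min_eq_left hle]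
    have hw : (r + r₀) ^ B ≤ 2 ^ B * r₀ ^ B := by
      rw [← Real.mul_rpow (by norm_num) hr₀.le]
      exact Real.rpow_le_rpow (by positivity) (by linarith) hB
    have h2 : (r + r₀) ^ B * φ r₀ ≤ 2 ^ B * C₁ * (r ^ B * φ r) := by
      calc (r + r₀) ^ B * φ r₀ ≤ 2 ^ B * r₀ ^ B * φ r₀ :=
            mul_le_mul_of_nonneg_right hw hQ.le
        _ = 2 ^ B * (r₀ ^ B * φ r₀) := by ring
        _ ≤ 2 ^ B * (C₁ * (r ^ B * φ r)) :=
            mul_le_mul_of_nonneg_left (hdec r r₀ hr hle) h2B.le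
        _ = 2 ^ B * C₁ * (r ^ B * φ r) := by ring
    calc (φ r)⁻¹ * ((r ^ A)⁻¹ * (r ^ B)⁻¹) * (r ^ A * (r + r₀) ^ B) * φ r₀
        = ((r + r₀) ^ B * φ r₀) / (r ^ B * φ r) := by field_simp
      _ ≤ 2 ^ B * C₁ := (div_le_iff₀ (by positivity)).mpr h2
      _ ≤ 2 ^ B * max C₁ C₂ :=
          mul_le_mul_of_nonneg_left (le_max_left _ _) h2B.le
  · rw [min_eq_right hle]
    have hw : (r + r₀) ^ B ≤ 2 ^ B * r ^ B := by
      rw [← Real.mul_rpow (by norm_num) hr.le]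
      exact Real.rpow_le_rpow (by positivity) (by linarith) hB
    have h2 : r₀ ^ A * (r + r₀) ^ B * φ r₀ ≤ 2 ^ B * C₂ * (r ^ A * (r ^ B * φ r)) := by
      calc r₀ ^ A * (r + r₀) ^ B * φ r₀ ≤ r₀ ^ A * (2 ^ B * r ^ B) * φ r₀ := by
            refine mul_le_mul_of_nonneg_right (mul_le_mul_of_nonneg_left hw ?_) hQ.le
            positivity
        _ = 2 ^ B * r ^ B * (r₀ ^ A * φ r₀) := by ring
        _ ≤ 2 ^ B * r ^ B * (C₂ * (r ^ A * φ r)) := by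
            refine mul_le_mul_of_nonneg_left (hinc r₀ r hr₀ hle) (by positivity)
        _ = 2 ^ B * C₂ * (r ^ A * (r ^ B * φ r)) := by ring
    calc (φ r)⁻¹ * ((r ^ A)⁻¹ * (r ^ B)⁻¹) * (r₀ ^ A * (r + r₀) ^ B) * φ r₀
        = (r₀ ^ A * (r + r₀) ^ B * φ r₀) / (r ^ A * (r ^ B * φ r)) := by field_simp
      _ ≤ 2 ^ B * C₂ := (div_le_iff₀ (by positivity)).mpr h2
      _ ≤ 2 ^ B * max C₁ C₂ :=
          mul_le_mul_of_nonneg_left (le_max_right _ _) h2B.le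

end AuxFofana

/-- upper bound for the Fofana norm of the characteristic function of
a ball: `‖χ_{B(0,r₀)}‖_{(L^q,L^p)^φ} ≤ C / φ(r₀)`; in particular it is finite, i.e.
`χ_{B(0,r₀)} ∈ (L^q,L^p)^φ(ℝ^d)`. -/
theorem fofanaNorm_indicator_ball_upper (d : ℕ) (q p : ℝ≥0∞) (hq : 1 ≤ q) (hqp : q ≤ p)
    (φ : ℝ → ℝ) (hφ : IsGqp d q p φ) :
    ∃ C : ℝ, 0 < C ∧ ∀ r₀ : ℝ, 0 < r₀ →
      fofanaNorm d ((Metric.ball (0 : Rd d) r₀).indicator fun _ => (1 : ℂ)) q p φ ≤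
          ENNReal.ofReal (C / φ r₀) ∧
        fofanaNorm d ((Metric.ball (0 : Rd d) r₀).indicator fun _ => (1 : ℂ)) q p φ < ⊤ := by
  obtain ⟨C₁, hC₁, hdec⟩ := hφ.almost_decreasing
  obtain ⟨C₂, hC₂, hinc⟩ := hφ.almost_increasing
  set aq : ℝ := (1 / q).toReal with haq
  set ap : ℝ := (1 / p).toReal with hap
  have haq0 : 0 ≤ aq := ENNReal.toReal_nonneg
  have hap0 : 0 ≤ ap := ENNReal.toReal_nonneg
  set A : ℝ := (d : ℝ) * aq with hA
  set B : ℝ := (d : ℝ) * ap with hB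
  have hA0 : 0 ≤ A := by positivity
  have hB0 : 0 ≤ B := by positivity
  have hp1 : 1 ≤ p := le_trans hq hqp
  set v : ℝ≥0∞ := volume (ball (0 : Rd d) 1) with hv
  have hvlt : v < ⊤ := measure_ball_lt_top
  have hvpos : 0 < v := measure_ball_pos _ _ one_pos
  set v₀ : ℝ := v.toReal with hv₀
  have hv₀pos : 0 < v₀ := ENNReal.toReal_pos hvpos.ne' hvlt.ne
  have hvof : v = ENNReal.ofReal v₀ := (ENNReal.ofReal_toReal hvlt.ne).symm
  set C : ℝ := v₀ ^ aq * v₀ ^ ap * ((2 : ℝ) ^ B * max C₁ C₂) with hC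
  have hmax : (0:ℝ) < max C₁ C₂ := lt_max_iff.mpr (Or.inl hC₁)
  have hCpos : 0 < C := by
    have h2B : (0:ℝ) < 2 ^ B := Real.rpow_pos_of_pos two_pos B
    positivity
  refine ⟨C, hCpos, fun r₀ hr₀ => ?_⟩
  have hbound : fofanaNorm d ((Metric.ball (0 : Rd d) r₀).indicator fun _ => (1 : ℂ)) q p φ
      ≤ ENNReal.ofReal (C / φ r₀) := by
    rw [fofanaNorm]
    refine iSup_le fun ⟨r, hr⟩ => ?_
    -- bound the amalgam norm
    have hball : (0:ℝ) < min r r₀ := lt_min hr hr₀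
    have hsum : (0:ℝ) < r + r₀ := by linarith
    have hcont : contAmalgam d ((Metric.ball (0 : Rd d) r₀).indicator fun _ => (1 : ℂ)) q p r
        ≤ ENNReal.ofReal (min r r₀ ^ A * v₀ ^ aq) *
            ENNReal.ofReal ((r + r₀) ^ B * v₀ ^ ap) := by
      have h1 := eLpNormE_le_of_le_indicator (μ := volume)
        (g := fun y => eLpNorm ((Metric.ball y r).indicator
          ((Metric.ball (0 : Rd d) r₀).indicator fun _ => (1 : ℂ))) q volume)
        (s := ball (0 : Rd d) (r + r₀)) measurableSet_ball
        (volume (ball (0 : Rd d) (min r r₀)) ^ aq)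
        (fun y => inner_bound_aux d hq hr hr₀ y) hp1
      refine le_trans h1 ?_
      have hm : volume (ball (0 : Rd d) (min r r₀)) ^ aq
          = ENNReal.ofReal (min r r₀ ^ A * v₀ ^ aq) := by
        rw [volume_ball_Rd d 0 hball, ← hv, hvof, ← ENNReal.ofReal_mul (by positivity),
          ENNReal.ofReal_rpow_of_pos (by positivity),
          Real.mul_rpow (by positivity) hv₀pos.le, ← Real.rpow_natCast (min r r₀) d,
          ← Real.rpow_mul hball.le]
      have hw : volume (ball (0 : Rd d) (r + r₀)) ^ ap
          = ENNReal.ofReal ((r + r₀) ^ B * v₀ ^ ap) := by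
        rw [volume_ball_Rd d 0 hsum, ← hv, hvof, ← ENNReal.ofReal_mul (by positivity),
          ENNReal.ofReal_rpow_of_pos (by positivity),
          Real.mul_rpow (by positivity) hv₀pos.le, ← Real.rpow_natCast (r + r₀) d,
          ← Real.rpow_mul hsum.le]
      rw [hm, hw]
    have hφr : 0 < φ r := hφ.pos r hr
    calc ENNReal.ofReal ((φ r)⁻¹ * r ^ ((d : ℝ) * (-aq - ap))) *
          contAmalgam d ((Metric.ball (0 : Rd d) r₀).indicator fun _ => (1 : ℂ)) q p r
        ≤ ENNReal.ofReal ((φ r)⁻¹ * r ^ ((d : ℝ) * (-aq - ap))) *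
            (ENNReal.ofReal (min r r₀ ^ A * v₀ ^ aq) *
              ENNReal.ofReal ((r + r₀) ^ B * v₀ ^ ap)) := by
          exact mul_le_mul_right hcont _
      _ = ENNReal.ofReal ((φ r)⁻¹ * r ^ ((d : ℝ) * (-aq - ap)) *
            (min r r₀ ^ A * v₀ ^ aq * ((r + r₀) ^ B * v₀ ^ ap))) := by
          rw [← ENNReal.ofReal_mul (by positivity), ← ENNReal.ofReal_mul (by positivity)]
      _ ≤ ENNReal.ofReal (C / φ r₀) := by
          refine ENNReal.ofReal_le_ofReal ?_
          have hcore := core_real_aux (A := A) (B := B) hB0 φ hφ.pos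
            (fun a b ha hab => hdec a b ha hab) (fun a b ha hab => hinc a b ha hab) hr hr₀
          have hexp : (d : ℝ) * (-aq - ap) = -A - B := by rw [hA, hB]; ring
          rw [hexp]
          have hV : (0:ℝ) ≤ v₀ ^ aq * v₀ ^ ap := by positivity
          have := mul_le_mul_of_nonneg_left hcore hV
          calc (φ r)⁻¹ * r ^ (-A - B) *
                (min r r₀ ^ A * v₀ ^ aq * ((r + r₀) ^ B * v₀ ^ ap))
              = v₀ ^ aq * v₀ ^ ap *
                  ((φ r)⁻¹ * r ^ (-A - B) * (min r r₀ ^ A * (r + r₀) ^ B)) := by ring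
            _ ≤ v₀ ^ aq * v₀ ^ ap * ((2:ℝ) ^ B * max C₁ C₂ / φ r₀) := this
            _ = C / φ r₀ := by rw [hC]; ring
  exact ⟨hbound, lt_of_le_of_lt hbound ENNReal.ofReal_lt_top⟩
end
end

section
/- Let $1 < q \le p < \infty$ and $\phi \in \mathcal{G}_{q,p}$, and assume there is a constant $C_0 > 0$ such that for every $r > 0$, $\int_r^\infty \phi^q(t)\, t^{\frac{dq}{p} - 1}\, dt \le C_0\, \phi^q(r)\, r^{\frac{dq}{p}}$. Then there exists a constant $C > 0$ such that for every measurable function $f : \mathbb{R}^d \to \mathbb{C}$ and every $r > 0$, $\;\sum_{i=1}^{\infty} \frac{1}{(2^{i-1})^d}\, {}_{2^{i+1}r}\|f\|_{q,p}^q \le C\, \phi^q(r)\, r^{dq(\frac{1}{q} + \frac{1}{p})}\, \|f\|_{(L^q,L^p)^\phi}^q$. -/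
open MeasureTheory ENNReal Set Metric Filter

noncomputable section

/-- Auxiliary: the amalgam norm at scale `s` is controlled by the Fofana norm. -/
private lemma amalgam_le_fofana (d : ℕ) (q p : ℝ≥0∞) (φ : ℝ → ℝ)
    (hφpos : ∀ t : ℝ, 0 < t → 0 < φ t) (f : Rd d → ℂ) {s : ℝ} (hs : 0 < s) :
    contAmalgam d f q p s ≤
      ENNReal.ofReal (φ s * s ^ ((d : ℝ) * ((1 / q).toReal + (1 / p).toReal))) *
        fofanaNorm d f q p φ := by
  set e : ℝ := (d : ℝ) * ((1 / q).toReal + (1 / p).toReal) with he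
  have hφs := hφpos s hs
  have hexp : (d : ℝ) * (-(1 / q).toReal - (1 / p).toReal) = -e := by rw [he]; ring
  have hkey : ENNReal.ofReal (φ s * s ^ e) *
      ENNReal.ofReal ((φ s)⁻¹ * s ^ ((d : ℝ) * (-(1 / q).toReal - (1 / p).toReal))) = 1 := by
    rw [hexp, ← ENNReal.ofReal_mul (by positivity)]
    have h1 : φ s ≠ 0 := hφs.ne'
    have h2 : s ^ e ≠ 0 := (Real.rpow_pos_of_pos hs e).ne'
    have : φ s * s ^ e * ((φ s)⁻¹ * s ^ (-e)) = 1 := by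
      rw [Real.rpow_neg hs.le]
      field_simp
    rw [this, ENNReal.ofReal_one]
  calc contAmalgam d f q p s
      = (ENNReal.ofReal (φ s * s ^ e) *
          ENNReal.ofReal ((φ s)⁻¹ * s ^ ((d : ℝ) * (-(1 / q).toReal - (1 / p).toReal)))) *
          contAmalgam d f q p s := by rw [hkey, one_mul]
    _ = ENNReal.ofReal (φ s * s ^ e) *
          (ENNReal.ofReal ((φ s)⁻¹ * s ^ ((d : ℝ) * (-(1 / q).toReal - (1 / p).toReal))) *
            contAmalgam d f q p s) := by rw [mul_assoc]
    _ ≤ _ := by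
        gcongr
        exact le_iSup (fun t : {t : ℝ // 0 < t} =>
          ENNReal.ofReal ((φ t)⁻¹ *
            (t : ℝ) ^ ((d : ℝ) * (-(1 / q).toReal - (1 / p).toReal))) *
            contAmalgam d f q p t) ⟨s, hs⟩

/-- Auxiliary: pointwise value controlled by the integral over `(s/2, s]`. -/
private lemma pointwise_le_integral (φ : ℝ → ℝ) (hφm : Measurable φ)
    (hφpos : ∀ t : ℝ, 0 < t → 0 < φ t) {Cd : ℝ} (hCd : 0 < Cd) (b : ℝ)
    (hdec : ∀ r s : ℝ, 0 < r → r ≤ s → s ^ b * φ s ≤ Cd * (r ^ b * φ r))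
    {qr : ℝ} (hqr : 0 < qr) {s : ℝ} (hs : 0 < s) :
    ENNReal.ofReal (φ s ^ qr * s ^ (b * qr)) ≤
      ENNReal.ofReal (2 * Cd ^ qr) *
        ∫⁻ t in Set.Ioc (s / 2) s,
          ENNReal.ofReal (φ t ^ qr * t ^ (b * qr - 1)) := by
  have hφs := hφpos s hs
  set c : ℝ := φ s ^ qr * s ^ (b * qr) / (Cd ^ qr * s) with hc
  have hCdq : (0:ℝ) < Cd ^ qr := Real.rpow_pos_of_pos hCd qr
  -- pointwise bound on the interval
  have hpt : ∀ t ∈ Set.Ioc (s / 2) s,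
      ENNReal.ofReal c ≤ ENNReal.ofReal (φ t ^ qr * t ^ (b * qr - 1)) := by
    intro t ht
    have ht0 : 0 < t := lt_trans (by positivity) ht.1
    have hφt := hφpos t ht0
    apply ENNReal.ofReal_le_ofReal
    rw [hc, div_le_iff₀ (mul_pos hCdq hs)]
    have h1 : s ^ b * φ s ≤ Cd * (t ^ b * φ t) := hdec t s ht0 ht.2
    have h2 : (s ^ b * φ s) ^ qr ≤ (Cd * (t ^ b * φ t)) ^ qr :=
      Real.rpow_le_rpow (by positivity) h1 hqr.le
    have hl : (s ^ b * φ s) ^ qr = s ^ (b * qr) * φ s ^ qr := by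
      rw [Real.mul_rpow (by positivity) hφs.le, Real.rpow_mul hs.le]
    have hr : (Cd * (t ^ b * φ t)) ^ qr = Cd ^ qr * (t ^ (b * qr) * φ t ^ qr) := by
      rw [Real.mul_rpow hCd.le (by positivity), Real.mul_rpow (by positivity) hφt.le,
        Real.rpow_mul ht0.le]
    have h3 : s ^ (b * qr) * φ s ^ qr ≤ Cd ^ qr * (t ^ (b * qr) * φ t ^ qr) := by
      rw [← hl, ← hr]; exact h2
    have hta : t ^ (b * qr) = t ^ (b * qr - 1) * t := by
      conv_lhs => rw [show b * qr = (b * qr - 1) + 1 by ring]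
      rw [Real.rpow_add ht0, Real.rpow_one]
    calc φ s ^ qr * s ^ (b * qr) = s ^ (b * qr) * φ s ^ qr := by ring
      _ ≤ Cd ^ qr * (t ^ (b * qr) * φ t ^ qr) := h3
      _ = (φ t ^ qr * t ^ (b * qr - 1)) * (Cd ^ qr * t) := by rw [hta]; ring
      _ ≤ (φ t ^ qr * t ^ (b * qr - 1)) * (Cd ^ qr * s) := by
          have h0 : (0:ℝ) ≤ φ t ^ qr * t ^ (b * qr - 1) := by positivity
          gcongr
          exact ht.2
  have hmeas : Measurable fun t : ℝ => ENNReal.ofReal (φ t ^ qr * t ^ (b * qr - 1)) := by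
    fun_prop
  have hint1 : ENNReal.ofReal c * ENNReal.ofReal (s / 2) ≤
      ∫⁻ t in Set.Ioc (s / 2) s,
        ENNReal.ofReal (φ t ^ qr * t ^ (b * qr - 1)) := by
    have := setLIntegral_mono (μ := volume) (s := Set.Ioc (s / 2) s)
      (f := fun _ => ENNReal.ofReal c) hmeas hpt
    rwa [setLIntegral_const, Real.volume_Ioc,
      show s - s / 2 = s / 2 by ring] at this
  calc ENNReal.ofReal (φ s ^ qr * s ^ (b * qr))
      = ENNReal.ofReal (2 * Cd ^ qr) * (ENNReal.ofReal c * ENNReal.ofReal (s / 2)) := by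
        rw [← ENNReal.ofReal_mul (by positivity), ← ENNReal.ofReal_mul (by positivity)]
        congr 1
        rw [hc]
        field_simp
    _ ≤ _ := by gcongr

/-- Auxiliary: sum of integrals over the dyadic intervals is at most the integral over
`(r, ∞)`. -/
private lemma tsum_dyadic_integral_le (g : ℝ → ℝ≥0∞) {r : ℝ} (hr : 0 < r) :
    (∑' i : ℕ, ∫⁻ t in Set.Ioc ((2:ℝ) ^ (i+1) * r) ((2:ℝ) ^ (i+2) * r), g t) ≤
      ∫⁻ t in Set.Ioi r, g t := by
  set A : ℕ → Set ℝ := fun i => Set.Ioc ((2:ℝ) ^ (i+1) * r) ((2:ℝ) ^ (i+2) * r) with hA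
  have hm : ∀ i, MeasurableSet (A i) := fun i => measurableSet_Ioc
  have hd : Pairwise (Function.onFun Disjoint A) := by
    rw [pairwise_disjoint_on]
    intro i j hij
    apply Set.Ioc_disjoint_Ioc.mpr
    have h1 : (2:ℝ) ^ (i+2) * r ≤ (2:ℝ) ^ (j+1) * r :=
      mul_le_mul_of_nonneg_right
        (pow_le_pow_right₀ (by norm_num) (by omega : i + 2 ≤ j + 1)) hr.le
    exact le_trans (min_le_left _ _) (le_trans h1 (le_max_right _ _))
  rw [← lintegral_iUnion hm hd]
  apply lintegral_mono_set
  rintro x hx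
  simp only [Set.mem_iUnion] at hx
  obtain ⟨i, hi⟩ := hx
  have h2 : r ≤ (2:ℝ) ^ (i+1) * r :=
    le_mul_of_one_le_left hr.le (one_le_pow₀ (by norm_num))
  exact lt_of_le_of_lt h2 hi.1

/-- inequality (3.5): for `1 < q ≤ p < ∞`, `φ ∈ 𝒢_{q,p}` satisfying the
integral condition, `∑_{i≥1} 2^{-(i-1)d} ‖f‖_{q,p,2^{i+1}r}^q ≤ C φ(r)^q r^{dq(1/q+1/p)}
‖f‖_{(L^q,L^p)^φ}^q` (the sum below is over `i ∈ ℕ`, corresponding to `i - 1` there). -/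
theorem contAmalgam_dyadic_sum_bound (d : ℕ) (q p : ℝ≥0∞)
    (hq : 1 < q) (hqp : q ≤ p) (hp : p < ⊤)
    (φ : ℝ → ℝ) (hφ : IsGqp d q p φ) (C₀ : ℝ) (hC₀ : 0 < C₀)
    (hint : ∀ r : ℝ, 0 < r →
      (∫⁻ t in Set.Ioi r,
          ENNReal.ofReal
            (φ t ^ q.toReal * t ^ ((d : ℝ) * q.toReal * (1 / p).toReal - 1))) ≤
        ENNReal.ofReal
          (C₀ * (φ r ^ q.toReal * r ^ ((d : ℝ) * q.toReal * (1 / p).toReal)))) :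
    ∃ C : ℝ, 0 < C ∧ ∀ f : Rd d → ℂ, Measurable f → ∀ r : ℝ, 0 < r →
      (∑' i : ℕ, ((2 : ℝ≥0∞) ^ (i * d))⁻¹ *
          contAmalgam d f q p ((2 : ℝ) ^ (i + 2) * r) ^ q.toReal) ≤
        ENNReal.ofReal
            (C * (φ r ^ q.toReal *
              r ^ ((d : ℝ) * q.toReal * ((1 / q).toReal + (1 / p).toReal)))) *
          fofanaNorm d f q p φ ^ q.toReal := by
  obtain ⟨Cd, hCd, hdec⟩ := hφ.almost_decreasing
  have hqtop : q ≠ ⊤ := (lt_of_le_of_lt hqp hp).ne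
  have hq0 : q ≠ 0 := (lt_trans zero_lt_one hq).ne'
  have hqr0 : 0 < q.toReal := ENNReal.toReal_pos hq0 hqtop
  set qr : ℝ := q.toReal with hqrdef
  set b : ℝ := (d : ℝ) * (1 / p).toReal with hb
  have hdec' : ∀ r s : ℝ, 0 < r → r ≤ s → s ^ b * φ s ≤ Cd * (r ^ b * φ r) := hdec
  clear_value b
  refine ⟨2 ^ (2 * d) * (2 * Cd ^ qr) * C₀, by positivity, ?_⟩
  intro f hf r hr
  set F : ℝ≥0∞ := fofanaNorm d f q p φ with hF
  set e : ℝ := (d : ℝ) * ((1 / q).toReal + (1 / p).toReal) with he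
  have h1q : (1 / q).toReal = qr⁻¹ := by rw [one_div, ENNReal.toReal_inv, hqrdef]
  have heq : e * qr = (d : ℝ) + b * qr := by
    rw [he, hb, h1q]
    field_simp
  clear_value e
  set K : ℝ := 2 ^ (2 * d) * r ^ (d : ℝ) with hK
  have hK0 : 0 < K := by rw [hK]; positivity
  clear_value K
  set G : ℕ → ℝ := fun i => φ ((2:ℝ) ^ (i + 2) * r) ^ qr * ((2:ℝ) ^ (i + 2) * r) ^ (b * qr)
    with hG
  -- Step 1: bound each summand.
  have step1 : ∀ i : ℕ,
      ((2 : ℝ≥0∞) ^ (i * d))⁻¹ * contAmalgam d f q p ((2 : ℝ) ^ (i + 2) * r) ^ qr ≤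
        (ENNReal.ofReal K * ENNReal.ofReal (G i)) * F ^ qr := by
    intro i
    have hs : (0:ℝ) < (2:ℝ) ^ (i + 2) * r := by positivity
    have hφs := hφ.pos _ hs
    have hGi : G i = φ ((2:ℝ) ^ (i + 2) * r) ^ qr * ((2:ℝ) ^ (i + 2) * r) ^ (b * qr) := rfl
    -- the scalar identity
    have hscal : ((2:ℝ) ^ (i * d))⁻¹ *
        (φ ((2:ℝ) ^ (i + 2) * r) * ((2:ℝ) ^ (i + 2) * r) ^ e) ^ qr = K * G i := by
      have hA : (φ ((2:ℝ) ^ (i + 2) * r) * ((2:ℝ) ^ (i + 2) * r) ^ e) ^ qr =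
          φ ((2:ℝ) ^ (i + 2) * r) ^ qr * ((2:ℝ) ^ (i + 2) * r) ^ (e * qr) := by
        rw [Real.mul_rpow hφs.le (Real.rpow_nonneg hs.le e), ← Real.rpow_mul hs.le]
      have hB : ((2:ℝ) ^ (i + 2) * r) ^ (e * qr) =
          ((2:ℝ) ^ ((i + 2) * d) * r ^ (d:ℝ)) * ((2:ℝ) ^ (i + 2) * r) ^ (b * qr) := by
        rw [heq, Real.rpow_add hs]
        congr 1
        rw [Real.mul_rpow (by positivity) hr.le]
        congr 1
        rw [Real.rpow_natCast ((2:ℝ) ^ (i + 2)) d, ← pow_mul]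
      rw [hA, hB, hGi]
      have h2d : ((2:ℝ) ^ (i * d))⁻¹ * (2:ℝ) ^ ((i + 2) * d) = 2 ^ (2 * d) := by
        rw [show (i + 2) * d = i * d + 2 * d by ring, pow_add]
        field_simp
      rw [hK]
      field_simp
      ring
    -- assemble
    have h1 : contAmalgam d f q p ((2:ℝ) ^ (i + 2) * r) ^ qr ≤
        (ENNReal.ofReal (φ ((2:ℝ) ^ (i + 2) * r) * ((2:ℝ) ^ (i + 2) * r) ^ e) * F) ^ qr :=
      ENNReal.rpow_le_rpow (by
        have := amalgam_le_fofana d q p φ hφ.pos f hs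
        rwa [← he, ← hF] at this) hqr0.le
    have h2 : (ENNReal.ofReal (φ ((2:ℝ) ^ (i + 2) * r) * ((2:ℝ) ^ (i + 2) * r) ^ e) * F) ^ qr
        = ENNReal.ofReal ((φ ((2:ℝ) ^ (i + 2) * r) * ((2:ℝ) ^ (i + 2) * r) ^ e) ^ qr) *
          F ^ qr := by
      rw [ENNReal.mul_rpow_of_nonneg _ _ hqr0.le,
        ENNReal.ofReal_rpow_of_nonneg (by positivity) hqr0.le]
    have h3 : ((2 : ℝ≥0∞) ^ (i * d))⁻¹ = ENNReal.ofReal (((2:ℝ) ^ (i * d))⁻¹) := by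
      rw [ENNReal.ofReal_inv_of_pos (by positivity), ENNReal.ofReal_pow (by norm_num)]
      norm_num
    calc ((2 : ℝ≥0∞) ^ (i * d))⁻¹ * contAmalgam d f q p ((2 : ℝ) ^ (i + 2) * r) ^ qr
        ≤ ((2 : ℝ≥0∞) ^ (i * d))⁻¹ *
            ((ENNReal.ofReal (φ ((2:ℝ) ^ (i + 2) * r) * ((2:ℝ) ^ (i + 2) * r) ^ e) * F)
              ^ qr) := by gcongr
      _ = ENNReal.ofReal (((2:ℝ) ^ (i * d))⁻¹ *
            (φ ((2:ℝ) ^ (i + 2) * r) * ((2:ℝ) ^ (i + 2) * r) ^ e) ^ qr) * F ^ qr := by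
          rw [h2, h3, ← mul_assoc, ← ENNReal.ofReal_mul (by positivity)]
      _ = (ENNReal.ofReal K * ENNReal.ofReal (G i)) * F ^ qr := by
          rw [hscal, ENNReal.ofReal_mul hK0.le]
  -- Step 2: sum the scalar parts.
  have hGint : ∀ i : ℕ, ENNReal.ofReal (G i) ≤
      ENNReal.ofReal (2 * Cd ^ qr) *
        ∫⁻ t in Set.Ioc ((2:ℝ) ^ (i + 1) * r) ((2:ℝ) ^ (i + 2) * r),
          ENNReal.ofReal (φ t ^ qr * t ^ (b * qr - 1)) := by
    intro i
    have hs : (0:ℝ) < (2:ℝ) ^ (i + 2) * r := by positivity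
    have hhalf : (2:ℝ) ^ (i + 2) * r / 2 = (2:ℝ) ^ (i + 1) * r := by
      rw [pow_succ]
      ring
    have := pointwise_le_integral φ hφ.measurable hφ.pos hCd b hdec' hqr0 hs
    rwa [hhalf] at this
  have step2 : (∑' i : ℕ, ENNReal.ofReal (G i)) ≤
      ENNReal.ofReal (2 * Cd ^ qr) * ENNReal.ofReal (C₀ * (φ r ^ qr * r ^ (b * qr))) := by
    have hint' := hint r hr
    rw [show (d : ℝ) * q.toReal * (1 / p).toReal = b * qr by rw [hb, hqrdef]; ring] at hint'
    calc (∑' i : ℕ, ENNReal.ofReal (G i))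
        ≤ ∑' i : ℕ, ENNReal.ofReal (2 * Cd ^ qr) *
            ∫⁻ t in Set.Ioc ((2:ℝ) ^ (i + 1) * r) ((2:ℝ) ^ (i + 2) * r),
              ENNReal.ofReal (φ t ^ qr * t ^ (b * qr - 1)) :=
          ENNReal.tsum_le_tsum hGint
      _ = ENNReal.ofReal (2 * Cd ^ qr) *
            ∑' i : ℕ, ∫⁻ t in Set.Ioc ((2:ℝ) ^ (i + 1) * r) ((2:ℝ) ^ (i + 2) * r),
              ENNReal.ofReal (φ t ^ qr * t ^ (b * qr - 1)) := ENNReal.tsum_mul_left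
      _ ≤ ENNReal.ofReal (2 * Cd ^ qr) *
            ∫⁻ t in Set.Ioi r, ENNReal.ofReal (φ t ^ qr * t ^ (b * qr - 1)) := by
          gcongr
          exact tsum_dyadic_integral_le _ hr
      _ ≤ _ := by gcongr
  -- Final assembly.
  have hfin : ENNReal.ofReal K *
      (ENNReal.ofReal (2 * Cd ^ qr) * ENNReal.ofReal (C₀ * (φ r ^ qr * r ^ (b * qr)))) =
      ENNReal.ofReal (2 ^ (2 * d) * (2 * Cd ^ qr) * C₀ *
        (φ r ^ qr * r ^ ((d : ℝ) * q.toReal * ((1 / q).toReal + (1 / p).toReal)))) := by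
    rw [← ENNReal.ofReal_mul (by positivity), ← ENNReal.ofReal_mul hK0.le]
    congr 1
    rw [show (d : ℝ) * q.toReal * ((1 / q).toReal + (1 / p).toReal) = e * qr by
        rw [he, hqrdef]; ring,
      heq, Real.rpow_add hr, hK]
    ring
  calc (∑' i : ℕ, ((2 : ℝ≥0∞) ^ (i * d))⁻¹ *
          contAmalgam d f q p ((2 : ℝ) ^ (i + 2) * r) ^ qr)
      ≤ ∑' i : ℕ, (ENNReal.ofReal K * ENNReal.ofReal (G i)) * F ^ qr :=
        ENNReal.tsum_le_tsum step1
    _ = (∑' i : ℕ, ENNReal.ofReal K * ENNReal.ofReal (G i)) * F ^ qr :=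
        ENNReal.tsum_mul_right
    _ = (ENNReal.ofReal K * ∑' i : ℕ, ENNReal.ofReal (G i)) * F ^ qr := by
        rw [ENNReal.tsum_mul_left]
    _ ≤ (ENNReal.ofReal K *
          (ENNReal.ofReal (2 * Cd ^ qr) * ENNReal.ofReal (C₀ * (φ r ^ qr * r ^ (b * qr)))))
          * F ^ qr := by gcongr
    _ = _ := by rw [hfin]
end
end
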